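/- arXiv:2210.15659 — 11 statements merged into one kernel-verified Lean document; each statement's English description precedes it below -/
import Mathlib

section
/- Let β > 0, let g : ℝⁿ → ℝ, and let x_{k+1}, y_k, y_{k+1}, λ_k, v, λ^μ ∈ ℝⁿ. Set λ_{k+1} := λ_k + β(x_{k+1} − y_{k+1}). Assume λ_k is a subgradient of g at y_k and λ_{k+1} is a subgradient of g at y_{k+1} (subgradient inequalities over all of ℝⁿ). Then ⟨−λ_k − β(x_{k+1} − y_k), x_{k+1} − v⟩ + ⟨λ_{k+1}, y_{k+1} − v⟩ + ⟨λ^μ, x_{k+1} − y_{k+1}⟩ ≤ (1/(2β))‖λ_k − λ^μ‖² − (1/(2β))‖λ_{k+1} − λ^μ‖² + (β/2)‖v − y_k‖² − (β/2)‖v − y_{k+1}‖² − (1/(2β))‖λ_{k+1} − λ_k‖² − (β/2)‖y_k − y_{k+1}‖². -/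
open scoped RealInnerProductSpace

/-- the key per-step inequality of the ACVI analysis (Lemma 3.5 with
reference point `v = x^μ = y^μ` and multiplier `λ^μ`), assuming `λₖ` is a
subgradient of `g` at `yₖ` and `λ_{k+1}` is a subgradient of `g` at `y_{k+1}`. -/
theorem stmt3 {n : ℕ} (β : ℝ) (hβ : 0 < β) (g : EuclideanSpace ℝ (Fin n) → ℝ)
    (xk1 yk yk1 lamk lamk1 v lamμ : EuclideanSpace ℝ (Fin n))
    (hlam : lamk1 = lamk + β • (xk1 - yk1))
    (hgk : ∀ z, g z ≥ g yk + ⟪lamk, z - yk⟫)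
    (hgk1 : ∀ z, g z ≥ g yk1 + ⟪lamk1, z - yk1⟫) :
    ⟪-lamk - β • (xk1 - yk), xk1 - v⟫ + ⟪lamk1, yk1 - v⟫ + ⟪lamμ, xk1 - yk1⟫
      ≤ (1/(2*β)) * ‖lamk - lamμ‖^2 - (1/(2*β)) * ‖lamk1 - lamμ‖^2
        + (β/2) * ‖v - yk‖^2 - (β/2) * ‖v - yk1‖^2
        - (1/(2*β)) * ‖lamk1 - lamk‖^2 - (β/2) * ‖yk - yk1‖^2 := by
  have h1 := hgk yk1
  have h2 := hgk1 yk
  have hmono : 0 ≤ ⟪lamk1 - lamk, yk1 - yk⟫ := by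
    have e1 : ⟪lamk1, yk - yk1⟫ = -⟪lamk1, yk1 - yk⟫ := by
      rw [← inner_neg_right]; congr 1; abel
    rw [inner_sub_left]
    rw [e1] at h2
    linarith
  subst hlam
  simp only [← real_inner_self_eq_norm_sq] at *
  simp only [inner_sub_left, inner_sub_right, inner_add_left, inner_add_right,
    real_inner_smul_left, real_inner_smul_right, inner_neg_left, inner_neg_right,
    real_inner_comm yk xk1, real_inner_comm yk1 xk1, real_inner_comm lamk xk1,
    real_inner_comm v xk1, real_inner_comm lamμ xk1,
    real_inner_comm yk1 yk, real_inner_comm lamk yk, real_inner_comm v yk,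
    real_inner_comm lamμ yk,
    real_inner_comm lamk yk1, real_inner_comm v yk1, real_inner_comm lamμ yk1,
    real_inner_comm v lamk, real_inner_comm lamμ lamk, real_inner_comm lamμ v] at *
  rw [← sub_nonneg]
  refine hmono.trans (le_of_eq ?_)
  have hb : β ≠ 0 := ne_of_gt hβ
  field_simp
  ring
end

section
/- Let β > 0, S ⊆ ℝⁿ, F : ℝⁿ → ℝⁿ, g : ℝⁿ → ℝ, and let x_{k+1}, y_k, y_{k+1}, λ_k ∈ ℝⁿ with x_{k+1} ∈ S; set λ_{k+1} := λ_k + β(x_{k+1} − y_{k+1}). Let x^μ ∈ S and λ^μ ∈ ℝⁿ with y^μ := x^μ. Assume: (a) ⟨F(x_{k+1}) − F(x^μ), x_{k+1} − x^μ⟩ ≥ 0; (b) −λ_k − β(x_{k+1} − y_k) is a subgradient of x ↦ ⟨F(x_{k+1}), x⟩ at x_{k+1} relative to S; (c) λ_k is a subgradient of g at y_k and λ_{k+1} is a subgradient of g at y_{k+1}. Then ⟨F(x^μ), x_{k+1} − x^μ⟩ + g(y_{k+1}) − g(y^μ) + ⟨λ^μ, x_{k+1} − y_{k+1}⟩ ≤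 (1/(2β))‖λ_k − λ^μ‖² − (1/(2β))‖λ_{k+1} − λ^μ‖² + (β/2)‖y_k − y^μ‖² − (β/2)‖y_{k+1} − y^μ‖² − (1/(2β))‖λ_{k+1} − λ_k‖² − (β/2)‖y_{k+1} − y_k‖². -/
/-!
Monotonicity of `F` replaces `F(x^μ)` by `F(x_{k+1})`, and the optimality condition for
`x_{k+1}` tested at `x^μ ∈ S`, together with the subgradient inequality for `g` at `y_{k+1}`
tested at `y^μ`, bounds the left-hand side by bilinear terms. Monotonicity of `∂g` along
`y_k, y_{k+1}` contributes `⟪λ_{k+1} - λ_k, y_{k+1} - y_k⟫ ≥ 0`. Since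
`λ_k - λ_{k+1} = -β (x_{k+1} - y_{k+1})`, what remains is
`(1/β)⟪λ_k - λ_{k+1}, λ_{k+1} - λ^μ⟫ + β⟪y_k - y_{k+1}, y_{k+1} - y^μ⟫`, and the three-point
identity `2⟪a - b, b - c⟫ = ‖a - c‖² - ‖b - c‖² - ‖b - a‖²` turns it into the right-hand side.
-/

open scoped RealInnerProductSpace

section Subgradient

variable {E : Type*} [NormedAddCommGroup E] [InnerProductSpace ℝ E]

def IsSubgradientOn (h : E → ℝ) (S : Set E) (x w : E) : Prop :=
  ∀ z ∈ S, h z ≥ h x + ⟪w, z - x⟫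

theorem IsSubgradientOn.sub_le_inner {h : E → ℝ} {S : Set E} {x w z : E}
    (hw : IsSubgradientOn h S x w) (hz : z ∈ S) : h x - h z ≤ ⟪w, x - z⟫ := by
  have := hw z hz
  rw [← neg_sub x z, inner_neg_right] at this
  linarith

theorem IsSubgradientOn.inner_sub_nonneg {h : E → ℝ} {S : Set E} {x₁ x₂ w₁ w₂ : E}
    (h₁ : IsSubgradientOn h S x₁ w₁) (h₂ : IsSubgradientOn h S x₂ w₂)
    (hx₁ : x₁ ∈ S) (hx₂ : x₂ ∈ S) : 0 ≤ ⟪w₁ - w₂, x₁ - x₂⟫ := by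
  have h₁₂ := h₁.sub_le_inner hx₂
  have h₂₁ := h₂.sub_le_inner hx₁
  rw [← neg_sub x₁ x₂, inner_neg_right] at h₂₁
  rw [inner_sub_left]
  linarith

theorem IsSubgradientOn.inner_sub_le_of_inner {v : E} {S : Set E} {x w z : E}
    (hw : IsSubgradientOn (⟪v, ·⟫) S x w) (hz : z ∈ S) : ⟪v, x - z⟫ ≤ ⟪w, x - z⟫ := by
  rw [inner_sub_right]
  exact hw.sub_le_inner hz

end Subgradient

theorem two_mul_real_inner_sub_sub {E : Type*} [NormedAddCommGroup E] [InnerProductSpace ℝ E]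
    (a b c : E) : 2 * ⟪a - b, b - c⟫ = ‖a - c‖ ^ 2 - ‖b - c‖ ^ 2 - ‖b - a‖ ^ 2 := by
  simp only [norm_sub_sq_real, inner_sub_left, inner_sub_right, real_inner_self_eq_norm_sq]
  linear_combination -2 * real_inner_comm a b

theorem stmt4_general {n : ℕ} (β : ℝ) (hβ : 0 < β) (S : Set (EuclideanSpace ℝ (Fin n)))
    (F : EuclideanSpace ℝ (Fin n) → EuclideanSpace ℝ (Fin n))
    (g : EuclideanSpace ℝ (Fin n) → ℝ)
    (xk1 yk yk1 lamk lamk1 xμ lamμ : EuclideanSpace ℝ (Fin n))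
    (hxμ : xμ ∈ S)
    (hlam : lamk1 = lamk + β • (xk1 - yk1))
    (hmono : 0 ≤ ⟪F xk1 - F xμ, xk1 - xμ⟫)
    (hfsub : ∀ z ∈ S,
      ⟪F xk1, z⟫ ≥ ⟪F xk1, xk1⟫ + ⟪-lamk - β • (xk1 - yk), z - xk1⟫)
    (hgk : ∀ z, g z ≥ g yk + ⟪lamk, z - yk⟫)
    (hgk1 : ∀ z, g z ≥ g yk1 + ⟪lamk1, z - yk1⟫) :
    ⟪F xμ, xk1 - xμ⟫ + g yk1 - g xμ + ⟪lamμ, xk1 - yk1⟫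
      ≤ (1/(2*β)) * ‖lamk - lamμ‖^2 - (1/(2*β)) * ‖lamk1 - lamμ‖^2
        + (β/2) * ‖yk - xμ‖^2 - (β/2) * ‖yk1 - xμ‖^2
        - (1/(2*β)) * ‖lamk1 - lamk‖^2 - (β/2) * ‖yk1 - yk‖^2 := by
  replace hgk : IsSubgradientOn g Set.univ yk lamk := fun z _ ↦ hgk z
  replace hgk1 : IsSubgradientOn g Set.univ yk1 lamk1 := fun z _ ↦ hgk1 z
  have hF : ⟪F xμ, xk1 - xμ⟫ ≤ ⟪-lamk - β • (xk1 - yk), xk1 - xμ⟫ := by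
    have := (show IsSubgradientOn (⟪F xk1, ·⟫) S xk1 _ from hfsub).inner_sub_le_of_inner hxμ
    rw [inner_sub_left] at hmono
    linarith
  have hg : g yk1 - g xμ ≤ ⟪lamk1, yk1 - xμ⟫ := hgk1.sub_le_inner trivial
  have hcross : 0 ≤ ⟪lamk1 - lamk, yk1 - yk⟫ := hgk1.inner_sub_nonneg hgk trivial trivial
  have hdual : ⟪lamk - lamk1, lamk1 - lamμ⟫ = β * ⟪xk1 - yk1, lamμ - lamk1⟫ := by
    rw [hlam, sub_add_cancel_left, inner_neg_left, real_inner_smul_left, ← neg_sub lamμ,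
      inner_neg_right, mul_neg, neg_neg]
  calc ⟪F xμ, xk1 - xμ⟫ + g yk1 - g xμ + ⟪lamμ, xk1 - yk1⟫
      ≤ ⟪-lamk - β • (xk1 - yk), xk1 - xμ⟫ + ⟪lamk1, yk1 - xμ⟫ + ⟪lamμ, xk1 - yk1⟫
          + ⟪lamk1 - lamk, yk1 - yk⟫ := by linarith
    _ = ⟪xk1 - yk1, lamμ - lamk1⟫ + β * ⟪yk - yk1, yk1 - xμ⟫ := by
      subst hlam
      simp only [inner_add_left, inner_add_right, inner_sub_left, inner_sub_right, inner_neg_left,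
        real_inner_smul_right, real_inner_comm]
      ring
    _ = (1/(2*β)) * (2 * ⟪lamk - lamk1, lamk1 - lamμ⟫) + (β/2) * (2 * ⟪yk - yk1, yk1 - xμ⟫) := by
      rw [hdual]
      field_simp
    _ = _ := by
      rw [two_mul_real_inner_sub_sub, two_mul_real_inner_sub_sub]
      ring

/-- Lemma 3.6: one-step descent bound relative to the central-path
point `x^μ = y^μ` with multiplier `λ^μ`. -/
theorem stmt4 {n : ℕ} (β : ℝ) (hβ : 0 < β) (S : Set (EuclideanSpace ℝ (Fin n)))
    (F : EuclideanSpace ℝ (Fin n) → EuclideanSpace ℝ (Fin n))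
    (g : EuclideanSpace ℝ (Fin n) → ℝ)
    (xk1 yk yk1 lamk lamk1 xμ lamμ : EuclideanSpace ℝ (Fin n))
    (hxk1 : xk1 ∈ S) (hxμ : xμ ∈ S)
    (hlam : lamk1 = lamk + β • (xk1 - yk1))
    (hmono : 0 ≤ ⟪F xk1 - F xμ, xk1 - xμ⟫)
    (hfsub : ∀ z ∈ S,
      ⟪F xk1, z⟫ ≥ ⟪F xk1, xk1⟫ + ⟪-lamk - β • (xk1 - yk), z - xk1⟫)
    (hgk : ∀ z, g z ≥ g yk + ⟪lamk, z - yk⟫)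
    (hgk1 : ∀ z, g z ≥ g yk1 + ⟪lamk1, z - yk1⟫) :
    ⟪F xμ, xk1 - xμ⟫ + g yk1 - g xμ + ⟪lamμ, xk1 - yk1⟫
      ≤ (1/(2*β)) * ‖lamk - lamμ‖^2 - (1/(2*β)) * ‖lamk1 - lamμ‖^2
        + (β/2) * ‖yk - xμ‖^2 - (β/2) * ‖yk1 - xμ‖^2
        - (1/(2*β)) * ‖lamk1 - lamk‖^2 - (β/2) * ‖yk1 - yk‖^2 :=
  stmt4_general β hβ S F g xk1 yk yk1 lamk lamk1 xμ lamμ hxμ hlam hmono hfsub hgk hgk1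
end

section
/- Let β > 0, S ⊆ ℝⁿ, F : ℝⁿ → ℝⁿ monotone on S, g : ℝⁿ → ℝ, and let sequences x, y, λ : ℕ → ℝⁿ satisfy for all k ≥ 0: x_{k+1} ∈ S; λ_{k+1} = λ_k + β(x_{k+1} − y_{k+1}); −λ_k − β(x_{k+1} − y_k) is a subgradient of x ↦ ⟨F(x_{k+1}), x⟩ at x_{k+1} relative to S; and λ_k is a subgradient of g at y_k for every k ≥ 0. Assume there exist x^μ ∈ S and λ^μ ∈ ℝⁿ such that −λ^μ is a subgradient of x ↦ ⟨F(x^μ), x⟩ at x^μ relative to S and λ^μ is a subgradient of g at x^μ. Then: (i) for every K, ∑_{k=0}^{K} [ (1/(2β))‖λ_{k+1} − λ_k‖² + (β/2)‖y_{k+1} − y_k‖² ] ≤ (1/(2β))‖λ_0 − λ^μ‖² + (β/2)‖y_0 − x^μ‖²; and (ii) x_k − y_k → 0 as k → ∞. -/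
/-!
The quantity `Vₖ = (1/(2β))‖λₖ - λ^μ‖² + (β/2)‖yₖ - x^μ‖²` is a Lyapunov function for the
iteration: it drops by at least the weighted step `Tₖ = (1/(2β))‖λₖ₊₁ - λₖ‖² + (β/2)‖yₖ₊₁ - yₖ‖²`.
Monotonicity of the subdifferential of `g` (between `yₖ₊₁` and `x^μ`, and between `yₖ₊₁` and `yₖ`)
and of the linearised `F`-part on `S` (between `xₖ₊₁` and `x^μ`, using monotonicity of `F`)
give three nonnegative inner products; after substituting the multiplier update their sum is
exactly `Vₖ - Vₖ₊₁ - Tₖ` by polarization. Telescoping gives the bound, so `Tₖ` is summable and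
tends to `0`, and `λₖ₊₁ - λₖ = β (xₖ₊₁ - yₖ₊₁)` gives `xₖ - yₖ → 0`.
-/

open scoped RealInnerProductSpace
open Filter Topology Finset

variable {E : Type*} [NormedAddCommGroup E]

noncomputable def weightedSqDist (β : ℝ) (l y l' y' : E) : ℝ :=
  (1/(2*β)) * ‖l - l'‖^2 + (β/2) * ‖y - y'‖^2

theorem weightedSqDist_nonneg {β : ℝ} (hβ : 0 ≤ β) (l y l' y' : E) :
    0 ≤ weightedSqDist β l y l' y' := by
  unfold weightedSqDist
  positivity

variable [InnerProductSpace ℝ E]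

def HasSubgradientWithin (f : E → ℝ) (S : Set E) (x w : E) : Prop :=
  ∀ z ∈ S, f x + ⟪w, z - x⟫ ≤ f z

namespace HasSubgradientWithin

theorem sub_le_inner_sub {f₁ f₂ : E → ℝ} {S : Set E} {u₁ u₂ w₁ w₂ : E}
    (h₁ : HasSubgradientWithin f₁ S u₁ w₁) (h₂ : HasSubgradientWithin f₂ S u₂ w₂)
    (hu₁ : u₁ ∈ S) (hu₂ : u₂ ∈ S) :
    (f₁ u₁ - f₁ u₂) - (f₂ u₁ - f₂ u₂) ≤ ⟪w₁ - w₂, u₁ - u₂⟫ := by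
  have e₁ := h₁ u₂ hu₂
  have e₂ := h₂ u₁ hu₁
  rw [← neg_sub u₁ u₂, inner_neg_right] at e₁
  rw [inner_sub_left]
  linarith

theorem inner_sub_nonneg {f : E → ℝ} {S : Set E} {u₁ u₂ w₁ w₂ : E}
    (h₁ : HasSubgradientWithin f S u₁ w₁) (h₂ : HasSubgradientWithin f S u₂ w₂)
    (hu₁ : u₁ ∈ S) (hu₂ : u₂ ∈ S) : 0 ≤ ⟪w₁ - w₂, u₁ - u₂⟫ := by
  simpa using h₁.sub_le_inner_sub h₂ hu₁ hu₂

theorem inner_sub_nonneg_of_inner {S : Set E} {a₁ a₂ u₁ u₂ w₁ w₂ : E}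
    (h₁ : HasSubgradientWithin (fun z => ⟪a₁, z⟫) S u₁ w₁)
    (h₂ : HasSubgradientWithin (fun z => ⟪a₂, z⟫) S u₂ w₂)
    (hu₁ : u₁ ∈ S) (hu₂ : u₂ ∈ S) (ha : 0 ≤ ⟪a₁ - a₂, u₁ - u₂⟫) :
    0 ≤ ⟪w₁ - w₂, u₁ - u₂⟫ := by
  refine ha.trans (le_of_eq_of_le ?_ (h₁.sub_le_inner_sub h₂ hu₁ hu₂))
  simp only [inner_sub_left, inner_sub_right]
  ring

end HasSubgradientWithin

theorem weightedSqDist_sub_sub {β : ℝ} (hβ : β ≠ 0) (l y l' y' lμ xμ : E) :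
    weightedSqDist β l y lμ xμ - weightedSqDist β l' y' lμ xμ - weightedSqDist β l' y' l y
      = -(β⁻¹ * ⟪l' - lμ, l' - l⟫) - β * ⟪y' - y, y' - xμ⟫ := by
  have hl : l - lμ = (l' - lμ) - (l' - l) := by abel
  have hy : y - xμ = (y' - xμ) - (y' - y) := by abel
  unfold weightedSqDist
  rw [hl, hy, norm_sub_sq_real (l' - lμ), norm_sub_sq_real (y' - xμ), real_inner_comm (y' - y)]
  field_simp
  ring

/-- `x, y, y', l, l'` play the roles of `xₖ₊₁, yₖ, yₖ₊₁, λₖ, λₖ₊₁`. -/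
theorem weightedSqDist_le_sub {β : ℝ} (hβ : 0 < β) {x y y' l l' lμ xμ : E}
    (hl' : l' = l + β • (x - y'))
    (hx : 0 ≤ ⟪l + β • (x - y) - lμ, xμ - x⟫)
    (hy' : 0 ≤ ⟪l' - lμ, y' - xμ⟫)
    (hstep : 0 ≤ ⟪l' - l, y' - y⟫) :
    weightedSqDist β l' y' l y
      ≤ weightedSqDist β l y lμ xμ - weightedSqDist β l' y' lμ xμ := by
  have hxy : x - y' = β⁻¹ • (l' - l) := by
    rw [hl', add_sub_cancel_left, smul_smul, inv_mul_cancel₀ hβ.ne', one_smul]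
  have h₁ : l + β • (x - y) - lμ = (l' - lμ) + β • (y' - y) := by
    rw [hl']; module
  have h₂ : xμ - x = -(β⁻¹ • (l' - l)) - (y' - xμ) := by
    rw [← hxy]; abel
  rw [h₁, h₂] at hx
  set a := l' - lμ
  set b := l' - l
  set d := y' - y
  set e := y' - xμ
  simp only [inner_add_left, inner_sub_right, inner_neg_right, real_inner_smul_left,
    real_inner_smul_right, ← mul_assoc, inv_mul_cancel₀ hβ.ne', one_mul,
    real_inner_comm b d] at hx
  have hkey : β⁻¹ * ⟪a, b⟫ + β * ⟪d, e⟫ ≤ 0 := by linarith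
  linarith [weightedSqDist_sub_sub hβ.ne' l y l' y' lμ xμ]

theorem sum_range_le_of_le_sub {T V : ℕ → ℝ} (hTV : ∀ k, T k ≤ V k - V (k+1))
    (hV : ∀ k, 0 ≤ V k) (m : ℕ) : ∑ k ∈ range m, T k ≤ V 0 := calc
  ∑ k ∈ range m, T k ≤ ∑ k ∈ range m, (V k - V (k+1)) := sum_le_sum fun k _ => hTV k
  _ = V 0 - V m := sum_range_sub' V m
  _ ≤ V 0 := sub_le_self _ (hV m)

theorem tendsto_zero_of_tendsto_norm_sq {ι G : Type*} [SeminormedAddCommGroup G] {l : Filter ι}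
    {f : ι → G} (h : Tendsto (fun i => ‖f i‖^2) l (𝓝 0)) : Tendsto f l (𝓝 0) := by
  rw [tendsto_zero_iff_norm_tendsto_zero]
  simpa [Real.sqrt_sq (norm_nonneg _)] using h.sqrt

theorem tendsto_sub_of_tendsto_weightedSqDist {β : ℝ} (hβ : 0 < β) {x y l : ℕ → E}
    (hl : ∀ k, l (k+1) = l k + β • (x (k+1) - y (k+1)))
    (hT : Tendsto (fun k => weightedSqDist β (l (k+1)) (y (k+1)) (l k) (y k)) atTop (𝓝 0)) :
    Tendsto (fun k => x k - y k) atTop (𝓝 0) := by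
  have hbound : ∀ k, ‖x (k+1) - y (k+1)‖^2
      ≤ (2/β) * weightedSqDist β (l (k+1)) (y (k+1)) (l k) (y k) := by
    intro k
    have hdl : ‖l (k+1) - l k‖^2 = β^2 * ‖x (k+1) - y (k+1)‖^2 := by
      rw [hl k, add_sub_cancel_left, norm_smul, Real.norm_of_nonneg hβ.le, mul_pow]
    have hy : 0 ≤ ‖y (k+1) - y k‖^2 := by positivity
    unfold weightedSqDist
    rw [hdl]
    field_simp
    nlinarith
  have hshift : Tendsto (fun k => ‖x (k+1) - y (k+1)‖^2) atTop (𝓝 0) :=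
    squeeze_zero (fun k => by positivity) hbound (by simpa using hT.const_mul (2/β))
  exact (tendsto_add_atTop_iff_nat 1).mp (tendsto_zero_of_tendsto_norm_sq hshift)

/-- Theorem 3.1: along the exact ACVI iteration (at a fixed barrier
weight μ, encoded by the subgradient conditions), the per-step increments are
summably bounded and `xₖ - yₖ → 0`. -/
theorem stmt5 {n : ℕ} (β : ℝ) (hβ : 0 < β) (S : Set (EuclideanSpace ℝ (Fin n)))
    (F : EuclideanSpace ℝ (Fin n) → EuclideanSpace ℝ (Fin n))
    (g : EuclideanSpace ℝ (Fin n) → ℝ)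
    (x y lam : ℕ → EuclideanSpace ℝ (Fin n))
    (hmono : ∀ u ∈ S, ∀ v ∈ S, 0 ≤ ⟪F u - F v, u - v⟫)
    (hxS : ∀ k, x (k+1) ∈ S)
    (hlam : ∀ k, lam (k+1) = lam k + β • (x (k+1) - y (k+1)))
    (hfsub : ∀ k, ∀ z ∈ S,
      ⟪F (x (k+1)), z⟫ ≥ ⟪F (x (k+1)), x (k+1)⟫
        + ⟪-(lam k) - β • (x (k+1) - y k), z - x (k+1)⟫)
    (hgsub : ∀ k, ∀ z, g z ≥ g (y k) + ⟪lam k, z - y k⟫)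
    (xμ lamμ : EuclideanSpace ℝ (Fin n)) (hxμ : xμ ∈ S)
    (hfμ : ∀ z ∈ S, ⟪F xμ, z⟫ ≥ ⟪F xμ, xμ⟫ + ⟪-lamμ, z - xμ⟫)
    (hgμ : ∀ z, g z ≥ g xμ + ⟪lamμ, z - xμ⟫) :
    (∀ K : ℕ, ∑ k ∈ Finset.range (K+1),
        ((1/(2*β)) * ‖lam (k+1) - lam k‖^2 + (β/2) * ‖y (k+1) - y k‖^2)
      ≤ (1/(2*β)) * ‖lam 0 - lamμ‖^2 + (β/2) * ‖y 0 - xμ‖^2) ∧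
    Tendsto (fun k => x k - y k) atTop (nhds 0) := by
  have hg : ∀ k, HasSubgradientWithin g Set.univ (y k) (lam k) := fun k z _ => hgsub k z
  have hgμ' : HasSubgradientWithin g Set.univ xμ lamμ := fun z _ => hgμ z
  have hdescent : ∀ k, weightedSqDist β (lam (k+1)) (y (k+1)) (lam k) (y k)
      ≤ weightedSqDist β (lam k) (y k) lamμ xμ
        - weightedSqDist β (lam (k+1)) (y (k+1)) lamμ xμ := by
    intro k
    have hx := HasSubgradientWithin.inner_sub_nonneg_of_inner (hfsub k) hfμ (hxS k) hxμ
      (hmono _ (hxS k) _ hxμ)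
    refine weightedSqDist_le_sub hβ (hlam k) ?_ ((hg (k+1)).inner_sub_nonneg hgμ' trivial trivial)
      ((hg (k+1)).inner_sub_nonneg (hg k) trivial trivial)
    rw [← neg_sub (x (k+1)) xμ, inner_neg_right, ← inner_neg_left]
    convert hx using 2
    abel
  have hbound := sum_range_le_of_le_sub hdescent
    (fun k => weightedSqDist_nonneg hβ.le (lam k) (y k) lamμ xμ)
  refine ⟨fun K => hbound (K+1), tendsto_sub_of_tendsto_weightedSqDist hβ hlam ?_⟩
  exact (summable_of_sum_range_le (fun k => weightedSqDist_nonneg hβ.le _ _ _ _)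
    hbound).tendsto_atTop_zero
end

section
/- Let β > 0, S ⊆ ℝⁿ, F : ℝⁿ → ℝⁿ, g : ℝⁿ → ℝ, and let x_{k+1}, y_k, y_{k+1}, λ_k ∈ ℝⁿ with x_{k+1} ∈ S; set λ_{k+1} := λ_k + β(x_{k+1} − y_{k+1}). Let v ∈ S (the point x_k^μ = y_k^μ). Assume: −λ_k − β(x_{k+1} − y_k) is a subgradient of x ↦ ⟨F(x_{k+1}), x⟩ at x_{k+1} relative to S, and λ_{k+1} is a subgradient of g at y_{k+1}. Then ⟨F(x_{k+1}), x_{k+1} − v⟩ + g(y_{k+1}) − g(v) ≤ ‖λ_{k+1}‖·‖x_{k+1} − y_{k+1}‖ + β‖y_{k+1} − y_k‖·‖x_{k+1} − v‖. -/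
open scoped RealInnerProductSpace

/-- upper bound on `f_k(x_{k+1}) - f_k(v) + g(y_{k+1}) - g(v)`
(with `f_k x = ⟪F x_{k+1}, x⟫` and `v = x_k^μ = y_k^μ ∈ S`). -/
theorem stmt6 {n : ℕ} (β : ℝ) (hβ : 0 < β) (S : Set (EuclideanSpace ℝ (Fin n)))
    (F : EuclideanSpace ℝ (Fin n) → EuclideanSpace ℝ (Fin n))
    (g : EuclideanSpace ℝ (Fin n) → ℝ)
    (xk1 yk yk1 lamk lamk1 v : EuclideanSpace ℝ (Fin n))
    (hxk1 : xk1 ∈ S) (hv : v ∈ S)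
    (hlam : lamk1 = lamk + β • (xk1 - yk1))
    (hfsub : ∀ z ∈ S,
      ⟪F xk1, z⟫ ≥ ⟪F xk1, xk1⟫ + ⟪-lamk - β • (xk1 - yk), z - xk1⟫)
    (hgk1 : ∀ z, g z ≥ g yk1 + ⟪lamk1, z - yk1⟫) :
    ⟪F xk1, xk1 - v⟫ + g yk1 - g v
      ≤ ‖lamk1‖ * ‖xk1 - yk1‖ + β * ‖yk1 - yk‖ * ‖xk1 - v‖ := by
  have h1 := hfsub v hv
  have h2 := hgk1 v
  have key : ⟪F xk1, xk1 - v⟫ + g yk1 - g v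
      ≤ ⟪lamk1, yk1 - xk1⟫ + β * ⟪yk1 - yk, v - xk1⟫ := by
    have e : ⟪-lamk - β • (xk1 - yk), v - xk1⟫
        = -(⟪lamk1, yk1 - xk1⟫ + β * ⟪yk1 - yk, v - xk1⟫) - ⟪lamk1, v - yk1⟫ := by
      subst hlam
      simp only [inner_sub_left, inner_add_left, inner_sub_right, inner_neg_left,
        real_inner_smul_left, real_inner_smul_right, inner_smul_left,
        RCLike.ofReal_real_eq_id, id_eq, starRingEnd_apply, star_trivial]
      ring
    have := inner_sub_right (𝕜 := ℝ) (F xk1) xk1 v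
    nlinarith [h1, h2, this, e]
  have c1 : ⟪lamk1, yk1 - xk1⟫ ≤ ‖lamk1‖ * ‖xk1 - yk1‖ := by
    have := real_inner_le_norm lamk1 (yk1 - xk1)
    rwa [norm_sub_rev] at this
  have c2 : ⟪yk1 - yk, v - xk1⟫ ≤ ‖yk1 - yk‖ * ‖xk1 - v‖ := by
    have := real_inner_le_norm (yk1 - yk) (v - xk1)
    rwa [norm_sub_rev v] at this
  nlinarith [key, c1, c2, mul_le_mul_of_nonneg_left c2 hβ.le]
end

section
/- Let β > 0, S ⊆ ℝⁿ, F : ℝⁿ → ℝⁿ, g : ℝⁿ → ℝ, and let x_k, x_{k+1}, y_{k−1}, y_k, y_{k+1}, λ_{k−1} ∈ ℝⁿ with x_k, x_{k+1} ∈ S; set λ_k := λ_{k−1} + β(x_k − y_k) and λ_{k+1} := λ_k + β(x_{k+1} − y_{k+1}). Assume: (a) −λ_{k−1} − β(x_k − y_{k−1}) is a subgradient of x ↦ ⟨F(x_k), x⟩ at x_k relative to S; (b) −λ_k − β(x_{k+1} − y_k) is a subgradient of x ↦ ⟨F(x_{k+1}), x⟩ at x_{k+1} relative to S; (c) λ_k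 is a subgradient of g at y_k and λ_{k+1} is a subgradient of g at y_{k+1}; (d) ⟨F(x_{k+1}) − F(x_k), x_{k+1} − x_k⟩ ≥ 0. Then (1/(2β))‖λ_{k+1} − λ_k‖² + (β/2)‖y_{k+1} − y_k‖² ≤ (1/(2β))‖λ_k − λ_{k−1}‖² + (β/2)‖y_k − y_{k−1}‖². -/
open scoped RealInnerProductSpace

lemma key_stmt7 {E : Type*} [NormedAddCommGroup E] [InnerProductSpace ℝ E]
    (β : ℝ) (hβ : 0 < β) (a a' d d' : E)
    (h1 : 0 ≤ ⟪a, d⟫) (h2 : ⟪a + β • (d - d'), (a - a') + β • d⟫ ≤ 0) :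
    (1/(2*β)) * ‖a‖^2 + (β/2) * ‖d‖^2 ≤ (1/(2*β)) * ‖a'‖^2 + (β/2) * ‖d'‖^2 := by
  have hn : (0:ℝ) ≤ ⟪(a - a') + β • (d - d'), (a - a') + β • (d - d')⟫ :=
    real_inner_self_nonneg
  rw [← real_inner_self_eq_norm_sq, ← real_inner_self_eq_norm_sq,
      ← real_inner_self_eq_norm_sq, ← real_inner_self_eq_norm_sq]
  simp only [inner_add_left, inner_add_right, inner_sub_left, inner_sub_right,
    real_inner_smul_left, real_inner_smul_right] at h2 hn ⊢
  simp only [real_inner_comm a' a, real_inner_comm d' d, real_inner_comm d a,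
    real_inner_comm d' a, real_inner_comm d a', real_inner_comm d' a'] at h2 hn ⊢
  rw [real_inner_comm] at h1
  have hβ' : β ≠ 0 := ne_of_gt hβ
  rw [div_mul_eq_mul_div, div_mul_eq_mul_div, div_mul_eq_mul_div, div_mul_eq_mul_div,
      one_mul, one_mul, div_add_div _ _ (by positivity) (by norm_num : (2:ℝ) ≠ 0),
      div_add_div _ _ (by positivity) (by norm_num : (2:ℝ) ≠ 0),
      div_le_div_iff₀ (by positivity) (by positivity)]
  have hkey : ⟪a,a⟫ + β*(β*⟪d,d⟫) ≤ ⟪a',a'⟫ + β*(β*⟪d',d'⟫) := by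
    nlinarith [hn, h2, h1, mul_nonneg hβ.le h1]
  nlinarith [mul_le_mul_of_nonneg_left hkey (by positivity : (0:ℝ) ≤ 4*β)]

/-- Lemma 3.7: non-increment of
`(1/(2β))‖λ_{k+1} - λ_k‖² + (β/2)‖y_{k+1} - y_k‖²` along exact ACVI. -/
theorem stmt7 {n : ℕ} (β : ℝ) (hβ : 0 < β) (S : Set (EuclideanSpace ℝ (Fin n)))
    (F : EuclideanSpace ℝ (Fin n) → EuclideanSpace ℝ (Fin n))
    (g : EuclideanSpace ℝ (Fin n) → ℝ)
    (xk xk1 ykm1 yk yk1 lamkm1 lamk lamk1 : EuclideanSpace ℝ (Fin n))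
    (hxk : xk ∈ S) (hxk1 : xk1 ∈ S)
    (hlamk : lamk = lamkm1 + β • (xk - yk))
    (hlamk1 : lamk1 = lamk + β • (xk1 - yk1))
    (hfsubk : ∀ z ∈ S,
      ⟪F xk, z⟫ ≥ ⟪F xk, xk⟫ + ⟪-lamkm1 - β • (xk - ykm1), z - xk⟫)
    (hfsubk1 : ∀ z ∈ S,
      ⟪F xk1, z⟫ ≥ ⟪F xk1, xk1⟫ + ⟪-lamk - β • (xk1 - yk), z - xk1⟫)
    (hgk : ∀ z, g z ≥ g yk + ⟪lamk, z - yk⟫)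
    (hgk1 : ∀ z, g z ≥ g yk1 + ⟪lamk1, z - yk1⟫)
    (hmono : 0 ≤ ⟪F xk1 - F xk, xk1 - xk⟫) :
    (1/(2*β)) * ‖lamk1 - lamk‖^2 + (β/2) * ‖yk1 - yk‖^2
      ≤ (1/(2*β)) * ‖lamk - lamkm1‖^2 + (β/2) * ‖yk - ykm1‖^2 := by
  -- h1 : monotonicity of the subgradients of g
  have h1 : 0 ≤ ⟪lamk1 - lamk, yk1 - yk⟫ := by
    have g1 := hgk yk1
    have g2 := hgk1 yk
    have r5 : ⟪lamk1, yk - yk1⟫ = -⟪lamk1, yk1 - yk⟫ := by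
      rw [show yk - yk1 = -(yk1 - yk) from by abel, inner_neg_right]
    rw [r5] at g2
    rw [inner_sub_left]
    linarith
  -- vector identities
  have hv : lamk1 - lamk + β • ((yk1 - yk) - (yk - ykm1))
      = (lamk + β • (xk1 - yk)) - (lamkm1 + β • (xk - ykm1)) := by
    rw [hlamk1, hlamk]; module
  have hw : (lamk1 - lamk) - (lamk - lamkm1) + β • (yk1 - yk) = β • (xk1 - xk) := by
    rw [hlamk1, hlamk]; module
  -- combine the two x-optimality conditions with monotonicity
  have hA' : ⟪-lamkm1 - β • (xk - ykm1), xk1 - xk⟫ ≤ ⟪F xk, xk1 - xk⟫ := by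
    have h := hfsubk xk1 hxk1
    simp only [inner_sub_right] at h ⊢; linarith
  have hB' : ⟪-lamk - β • (xk1 - yk), xk - xk1⟫ ≤ ⟪F xk1, xk - xk1⟫ := by
    have h := hfsubk1 xk hxk
    simp only [inner_sub_right] at h ⊢; linarith
  have r1 : ⟪-lamkm1 - β • (xk - ykm1), xk1 - xk⟫
      = -⟪lamkm1 + β • (xk - ykm1), xk1 - xk⟫ := by
    rw [show -lamkm1 - β • (xk - ykm1) = -(lamkm1 + β • (xk - ykm1)) from by abel,
      inner_neg_left]
  have r2 : ⟪-lamk - β • (xk1 - yk), xk - xk1⟫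
      = ⟪lamk + β • (xk1 - yk), xk1 - xk⟫ := by
    rw [show -lamk - β • (xk1 - yk) = -(lamk + β • (xk1 - yk)) from by abel,
      show xk - xk1 = -(xk1 - xk) from by abel, inner_neg_neg]
  have r3 : ⟪F xk1, xk - xk1⟫ = -⟪F xk1, xk1 - xk⟫ := by
    rw [show xk - xk1 = -(xk1 - xk) from by abel, inner_neg_right]
  rw [r1] at hA'
  rw [r2, r3] at hB'
  rw [inner_sub_left] at hmono
  have hval : ⟪lamk + β • (xk1 - yk), xk1 - xk⟫
      - ⟪lamkm1 + β • (xk - ykm1), xk1 - xk⟫ ≤ 0 := by linarith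
  have h2 : ⟪lamk1 - lamk + β • ((yk1 - yk) - (yk - ykm1)),
      ((lamk1 - lamk) - (lamk - lamkm1)) + β • (yk1 - yk)⟫ ≤ 0 := by
    rw [hw, real_inner_smul_right, hv, inner_sub_left]
    exact mul_nonpos_of_nonneg_of_nonpos hβ.le hval
  exact key_stmt7 β hβ (lamk1 - lamk) (lamk - lamkm1) (yk1 - yk) (yk - ykm1) h1 h2
end

section
/- Let p ≤ n, let C be a real p × n matrix of rank p, d ∈ ℝᵖ, and define P_c := I − Cᵀ(CCᵀ)⁻¹C and d_c := Cᵀ(CCᵀ)⁻¹d, and C₌ := {x ∈ ℝⁿ : Cx = d}. Let F : ℝⁿ → ℝⁿ be continuous and monotone on C₌, let β > 0 and y, λ ∈ ℝⁿ. Then the equation w + (1/β)·P_c F(w) − P_c y + (1/β)·P_c λ − d_c = 0 has a solution, the solution is unique, and it lies in C₌. -/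
open Matrix Filter Topology

/-!
Write `G w = (1/β) • (F w + λ) - y`, so that the equation reads `w + P_c G(w) = d_c`. Any solution
satisfies `C w = d`, so `w = d_c + z` with `C z = 0`, i.e. `P_c z = z`, and the equation becomes
`H z = 0` for `H z = z + P_c G(d_c + P_c z)`. Because `P_c` is symmetric and `d_c + P_c z ∈ C₌`,
monotonicity of `F` on `C₌` makes `H` strongly monotone on all of `ℝⁿ`.

A continuous strongly monotone self-map of `ℝᵏ` is bijective. Injectivity is immediate. For
surjectivity argue by induction on `k`: freezing the first coordinate at `t`, the remaining
coordinates of a preimage are given by a solution `x(t)` of a `(k-1)`-dimensional problem, which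
depends continuously on `t` by strong monotonicity; the first coordinate of `G(t, x(t))` is then a
continuous function of `t` growing at least like `t`, hence onto by the intermediate value theorem.
-/

section StronglyMonotone

variable {k : ℕ}

theorem dotProduct_self_nonneg {ι R : Type*} [Fintype ι] [Ring R] [LinearOrder R]
    [IsStrictOrderedRing R] (v : ι → R) : 0 ≤ v ⬝ᵥ v :=
  Finset.sum_nonneg fun i _ => mul_self_nonneg (v i)

theorem injective_of_strongly_monotone {G : (Fin k → ℝ) → Fin k → ℝ}
    (hmono : ∀ u v, (u - v) ⬝ᵥ (u - v) ≤ (G u - G v) ⬝ᵥ (u - v)) : Function.Injective G := by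
  intro u v huv
  have h := hmono u v
  rw [huv, sub_self, zero_dotProduct] at h
  exact sub_eq_zero.1 (dotProduct_self_eq_zero.1 (h.antisymm (dotProduct_self_nonneg _)))

theorem dotProduct_self_le_dotProduct_self_of_le_dotProduct {e a : Fin k → ℝ}
    (h : e ⬝ᵥ e ≤ a ⬝ᵥ e) : e ⬝ᵥ e ≤ a ⬝ᵥ a := by
  have h₀ := dotProduct_self_nonneg (a - e)
  simp only [sub_dotProduct, dotProduct_sub, dotProduct_comm e a] at h₀
  linarith

theorem continuousAt_of_tendsto_dotProduct_self_sub {X : Type*} [TopologicalSpace X]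
    {x : X → Fin k → ℝ} {s : X}
    (h : Tendsto (fun t => (x t - x s) ⬝ᵥ (x t - x s)) (𝓝 s) (𝓝 0)) : ContinuousAt x s := by
  have hnorm (v : Fin k → ℝ) : ‖(WithLp.toLp 2 v : EuclideanSpace ℝ (Fin k))‖ = √(v ⬝ᵥ v) := by
    rw [EuclideanSpace.norm_eq]
    simp [dotProduct, sq]
  have hL : Tendsto (fun t => (WithLp.toLp 2 (x t) : EuclideanSpace ℝ (Fin k))) (𝓝 s)
      (𝓝 (WithLp.toLp 2 (x s))) := by
    rw [tendsto_iff_norm_sub_tendsto_zero]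
    simp only [← WithLp.toLp_sub, hnorm]
    simpa using h.sqrt
  exact (PiLp.continuous_ofLp 2 _).continuousAt.tendsto.comp hL

theorem continuous_of_forall_apply_eq_of_strongly_monotone {X : Type*} [TopologicalSpace X]
    {G : X → (Fin k → ℝ) → Fin k → ℝ} (hG : ∀ u, Continuous fun t => G t u)
    (hmono : ∀ t u v, (u - v) ⬝ᵥ (u - v) ≤ (G t u - G t v) ⬝ᵥ (u - v))
    {x : X → Fin k → ℝ} {b : Fin k → ℝ} (hx : ∀ t, G t (x t) = b) : Continuous x := by
  refine continuous_iff_continuousAt.2 fun s => continuousAt_of_tendsto_dotProduct_self_sub ?_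
  have hbound (t : X) : (x t - x s) ⬝ᵥ (x t - x s) ≤ (b - G t (x s)) ⬝ᵥ (b - G t (x s)) :=
    dotProduct_self_le_dotProduct_self_of_le_dotProduct (hx t ▸ hmono t (x t) (x s))
  have hlim : Tendsto (fun t => (b - G t (x s)) ⬝ᵥ (b - G t (x s))) (𝓝 s) (𝓝 0) := by
    have hc : Continuous fun t => (b - G t (x s)) ⬝ᵥ (b - G t (x s)) := by
      have : Continuous fun t => b - G t (x s) := continuous_const.sub (hG (x s))
      exact continuous_finsetSum _ fun j _ => ((continuous_apply j).comp this).mul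
        ((continuous_apply j).comp this)
    simpa [hx s] using hc.tendsto s
  exact squeeze_zero (fun t => dotProduct_self_nonneg (x t - x s)) hbound hlim

theorem Real.surjective_of_strongly_monotone {h : ℝ → ℝ} (hc : Continuous h)
    (hmono : ∀ s t, (t - s) * (t - s) ≤ (h t - h s) * (t - s)) : Function.Surjective h := by
  have hgap (s t : ℝ) (hst : s ≤ t) : t - s ≤ h t - h s := by
    rcases hst.eq_or_lt with rfl | hlt
    · simp
    · exact le_of_mul_le_mul_right (hmono s t) (sub_pos.2 hlt)
  refine hc.surjective ?_ ?_
  · refine tendsto_atTop_mono' _ ?_ (tendsto_atTop_add_const_left _ (h 0) tendsto_id)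
    filter_upwards [eventually_ge_atTop 0] with t ht
    linarith [hgap 0 t ht, id_eq t]
  · refine tendsto_atBot_mono' _ ?_ (tendsto_atBot_add_const_left _ (h 0) tendsto_id)
    filter_upwards [eventually_le_atBot 0] with t ht
    linarith [hgap t 0 ht, id_eq t]

theorem surjective_of_strongly_monotone {G : (Fin k → ℝ) → Fin k → ℝ} (hG : Continuous G)
    (hmono : ∀ u v, (u - v) ⬝ᵥ (u - v) ≤ (G u - G v) ⬝ᵥ (u - v)) : Function.Surjective G := by
  induction k with
  | zero => exact fun b => ⟨b, Subsingleton.elim _ _⟩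
  | succ k ih =>
    intro b
    set slice : ℝ → (Fin k → ℝ) → Fin k → ℝ := fun t u => vecTail (G (vecCons t u))
    have hslice_cont (t : ℝ) : Continuous (slice t) :=
      (hG.comp (continuous_const.matrixVecCons continuous_id)).finTail
    have hslice_mono (t : ℝ) (u v : Fin k → ℝ) :
        (u - v) ⬝ᵥ (u - v) ≤ (slice t u - slice t v) ⬝ᵥ (u - v) := by
      simpa only [cons_sub_cons, sub_self, dotProduct_cons, tail_cons, tail_sub, mul_zero, zero_add,
        slice] using
        hmono (vecCons t u) (vecCons t v)
    choose x hx using fun t => ih (hslice_cont t) (hslice_mono t) (vecTail b)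
    have hx_cont : Continuous x := continuous_of_forall_apply_eq_of_strongly_monotone
      (fun u => (hG.comp (continuous_id.matrixVecCons continuous_const)).finTail)
      hslice_mono hx
    have hhead_mono (s t : ℝ) : (t - s) * (t - s) ≤
        (vecHead (G (vecCons t (x t))) - vecHead (G (vecCons s (x s)))) * (t - s) := by
      have := hmono (vecCons t (x t)) (vecCons s (x s))
      have htail : vecTail (G (vecCons t (x t))) = vecTail (G (vecCons s (x s))) :=
        (hx t).trans (hx s).symm
      simp only [cons_sub_cons, dotProduct_cons, head_cons, tail_cons, head_sub, tail_sub, htail,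
        sub_self, zero_dotProduct, add_zero] at this
      linarith [dotProduct_self_nonneg (x t - x s)]
    have hhead_cont : Continuous fun t => vecHead (G (vecCons t (x t))) :=
      (continuous_apply 0).comp (hG.comp (continuous_id.matrixVecCons hx_cont))
    obtain ⟨t, ht⟩ := Real.surjective_of_strongly_monotone hhead_cont hhead_mono (vecHead b)
    refine ⟨vecCons t (x t), ?_⟩
    rw [← cons_head_tail (G _), ← cons_head_tail b]
    exact congrArg₂ vecCons ht (hx t)

end StronglyMonotone

section KerProj

variable {K m n : Type*} [CommRing K] [Fintype m] [Fintype n] [DecidableEq m]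

theorem mulVec_transpose_mul_inv_mulVec {C : Matrix m n K} (hC : IsUnit (C * Cᵀ).det)
    (d : m → K) : C *ᵥ ((Cᵀ * (C * Cᵀ)⁻¹) *ᵥ d) = d := by
  rw [mulVec_mulVec, ← Matrix.mul_assoc, mul_nonsing_inv _ hC, one_mulVec]

variable [DecidableEq n]

noncomputable def kerProj (C : Matrix m n K) : Matrix n n K := 1 - Cᵀ * (C * Cᵀ)⁻¹ * C

theorem transpose_kerProj (C : Matrix m n K) : (kerProj C)ᵀ = kerProj C := by
  simp only [kerProj, transpose_sub, transpose_one, transpose_mul, transpose_transpose,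
    transpose_nonsing_inv, Matrix.mul_assoc]

theorem mul_kerProj {C : Matrix m n K} (hC : IsUnit (C * Cᵀ).det) : C * kerProj C = 0 := by
  rw [kerProj, Matrix.mul_sub, Matrix.mul_one, ← Matrix.mul_assoc, ← Matrix.mul_assoc,
    mul_nonsing_inv _ hC, Matrix.one_mul, sub_self]

theorem kerProj_mulVec_of_mulVec_eq_zero {C : Matrix m n K} {v : n → K} (hv : C *ᵥ v = 0) :
    kerProj C *ᵥ v = v := by
  rw [kerProj, sub_mulVec, one_mulVec, ← mulVec_mulVec, hv, mulVec_zero, sub_zero]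

end KerProj

theorem isUnit_det_mul_transpose_of_rank_eq {m n : Type*} [Fintype m] [Fintype n] [DecidableEq m]
    {C : Matrix m n ℝ} (hC : C.rank = Fintype.card m) : IsUnit (C * Cᵀ).det := by
  rw [← isUnit_iff_isUnit_det, ← mulVec_surjective_iff_isUnit]
  have hrange : LinearMap.range (C * Cᵀ).mulVecLin = ⊤ := by
    apply Submodule.eq_top_of_finrank_eq
    rw [← Matrix.rank, rank_self_mul_transpose, hC, Module.finrank_fintype_fun_eq_card]
  exact LinearMap.range_eq_top.1 hrange

theorem mulVec_dotProduct_of_transpose_eq {n : Type*} [Fintype n] {P : Matrix n n ℝ}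
    (hP : Pᵀ = P) (r e : n → ℝ) : (P *ᵥ r) ⬝ᵥ e = r ⬝ᵥ (P *ᵥ e) := by
  rw [dotProduct_mulVec, ← mulVec_transpose, hP]

theorem existsUnique_add_mulVec_eq {m : Type*} [Fintype m] {n : ℕ} {C : Matrix m (Fin n) ℝ}
    {P : Matrix (Fin n) (Fin n) ℝ} (hPT : Pᵀ = P) (hCP : C * P = 0)
    (hP : ∀ v, C *ᵥ v = 0 → P *ᵥ v = v) {d : m → ℝ} {x₀ : Fin n → ℝ} (hx₀ : C *ᵥ x₀ = d)
    {G : (Fin n → ℝ) → Fin n → ℝ} (hG : Continuous G)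
    (hmono : ∀ u v, C *ᵥ u = d → C *ᵥ v = d → 0 ≤ (G u - G v) ⬝ᵥ (u - v)) :
    ∃ w, w + P *ᵥ G w = x₀ ∧ C *ᵥ w = d ∧ ∀ w', w' + P *ᵥ G w' = x₀ → w' = w := by
  have hCPv (v : Fin n → ℝ) : C *ᵥ (P *ᵥ v) = 0 := by rw [mulVec_mulVec, hCP, zero_mulVec]
  have hmem (z : Fin n → ℝ) : C *ᵥ (x₀ + P *ᵥ z) = d := by rw [mulVec_add, hCPv, add_zero, hx₀]
  -- Feeding `G` only points `x₀ + P z ∈ C₌` is what makes `H` strongly monotone.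
  set H : (Fin n → ℝ) → Fin n → ℝ := fun z => z + P *ᵥ G (x₀ + P *ᵥ z)
  have hH_mono (u v : Fin n → ℝ) : (u - v) ⬝ᵥ (u - v) ≤ (H u - H v) ⬝ᵥ (u - v) := by
    have hsub : P *ᵥ (u - v) = (x₀ + P *ᵥ u) - (x₀ + P *ᵥ v) := by
      rw [mulVec_sub]; abel
    have hG_mono : 0 ≤ (P *ᵥ (G (x₀ + P *ᵥ u) - G (x₀ + P *ᵥ v))) ⬝ᵥ (u - v) := by
      rw [mulVec_dotProduct_of_transpose_eq hPT, hsub]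
      exact hmono _ _ (hmem u) (hmem v)
    have hdiff : H u - H v = (u - v) + P *ᵥ (G (x₀ + P *ᵥ u) - G (x₀ + P *ᵥ v)) := by
      simp only [H, mulVec_sub]; abel
    rw [hdiff, add_dotProduct]
    linarith
  have hH_cont : Continuous H := by
    have hP_cont : Continuous fun v : Fin n → ℝ => P *ᵥ v :=
      P.mulVecLin.continuous_of_finiteDimensional
    exact continuous_id.add (hP_cont.comp (hG.comp (continuous_const.add hP_cont)))
  obtain ⟨z, hz⟩ := surjective_of_strongly_monotone hH_cont hH_mono 0
  have hPz : P *ᵥ z = z := by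
    refine hP z ?_
    rw [eq_neg_of_add_eq_zero_left hz, mulVec_neg, hCPv, neg_zero]
  refine ⟨x₀ + z, ?_, hPz ▸ hmem z, fun w' hw' => ?_⟩
  · have hz' : z + P *ᵥ G (x₀ + z) = 0 := by simpa only [H, hPz] using hz
    rw [add_assoc, hz', add_zero]
  · have hCw' : C *ᵥ w' = d := by
      simpa [mulVec_add, hCPv, hx₀] using congrArg (C *ᵥ ·) hw'
    have hPw' : P *ᵥ (w' - x₀) = w' - x₀ := hP _ (by rw [mulVec_sub, hCw', hx₀, sub_self])
    have hHw' : H (w' - x₀) = H z := by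
      rw [hz]
      simp only [H, hPw', add_sub_cancel, sub_add_eq_add_sub, hw', sub_self]
    rw [← sub_eq_iff_eq_add', injective_of_strongly_monotone hH_mono hHw']

theorem stmt10_general {n p : ℕ} (C : Matrix (Fin p) (Fin n) ℝ)
    (hrank : C.rank = p) (d : Fin p → ℝ)
    (F : (Fin n → ℝ) → (Fin n → ℝ)) (hF : Continuous F)
    (hmono : ∀ u v : Fin n → ℝ, C.mulVec u = d → C.mulVec v = d →
      0 ≤ (F u - F v) ⬝ᵥ (u - v))
    (β : ℝ) (hβ : 0 < β) (y lam : Fin n → ℝ)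
    (Pc : Matrix (Fin n) (Fin n) ℝ) (hPc : Pc = 1 - Cᵀ * (C * Cᵀ)⁻¹ * C)
    (dc : Fin n → ℝ) (hdc : dc = (Cᵀ * (C * Cᵀ)⁻¹).mulVec d) :
    ∃ w : Fin n → ℝ,
      (w + (1/β) • Pc.mulVec (F w) - Pc.mulVec y + (1/β) • Pc.mulVec lam - dc = 0) ∧
      C.mulVec w = d ∧
      ∀ w' : Fin n → ℝ,
        (w' + (1/β) • Pc.mulVec (F w') - Pc.mulVec y + (1/β) • Pc.mulVec lam - dc = 0)
          → w' = w := by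
  have hC : IsUnit (C * Cᵀ).det := isUnit_det_mul_transpose_of_rank_eq (by simpa using hrank)
  have hPc' : Pc = kerProj C := hPc
  subst hPc' hdc
  set G : (Fin n → ℝ) → Fin n → ℝ := fun w => (1/β) • (F w + lam) - y
  have hG_mono (u v : Fin n → ℝ) (hu : C *ᵥ u = d) (hv : C *ᵥ v = d) :
      0 ≤ (G u - G v) ⬝ᵥ (u - v) := by
    have : G u - G v = (1/β) • (F u - F v) := by simp only [G]; module
    rw [this, smul_dotProduct, smul_eq_mul]
    exact mul_nonneg (by positivity) (hmono u v hu hv)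
  have hequation (w : Fin n → ℝ) :
      w + (1/β) • kerProj C *ᵥ F w - kerProj C *ᵥ y + (1/β) • kerProj C *ᵥ lam
        - (Cᵀ * (C * Cᵀ)⁻¹) *ᵥ d = 0 ↔ w + kerProj C *ᵥ G w = (Cᵀ * (C * Cᵀ)⁻¹) *ᵥ d := by
    simp only [G, mulVec_sub, mulVec_smul, mulVec_add]
    constructor <;> intro h <;> linear_combination (norm := module) h
  obtain ⟨w, hw, hCw, huniq⟩ := existsUnique_add_mulVec_eq (transpose_kerProj C) (mul_kerProj hC)
    (fun _ => kerProj_mulVec_of_mulVec_eq_zero) (mulVec_transpose_mul_inv_mulVec hC d)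
    (by fun_prop) hG_mono
  exact ⟨w, (hequation w).2 hw, hCw, fun w' hw' => huniq w' ((hequation w').1 hw')⟩

/-- Theorem: solution of the ACVI x-subproblem equation exists,
is unique, and lies in `C₌ = {x : Cx = d}`. -/
theorem stmt10 {n p : ℕ} (hpn : p ≤ n) (C : Matrix (Fin p) (Fin n) ℝ)
    (hrank : C.rank = p) (d : Fin p → ℝ)
    (F : (Fin n → ℝ) → (Fin n → ℝ)) (hF : Continuous F)
    (hmono : ∀ u v : Fin n → ℝ, C.mulVec u = d → C.mulVec v = d →
      0 ≤ (F u - F v) ⬝ᵥ (u - v))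
    (β : ℝ) (hβ : 0 < β) (y lam : Fin n → ℝ)
    (Pc : Matrix (Fin n) (Fin n) ℝ) (hPc : Pc = 1 - Cᵀ * (C * Cᵀ)⁻¹ * C)
    (dc : Fin n → ℝ) (hdc : dc = (Cᵀ * (C * Cᵀ)⁻¹).mulVec d) :
    ∃ w : Fin n → ℝ,
      (w + (1/β) • Pc.mulVec (F w) - Pc.mulVec y + (1/β) • Pc.mulVec lam - dc = 0) ∧
      C.mulVec w = d ∧
      ∀ w' : Fin n → ℝ,
        (w' + (1/β) • Pc.mulVec (F w') - Pc.mulVec y + (1/β) • Pc.mulVec lam - dc = 0)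
          → w' = w :=
  stmt10_general C hrank d F hF hmono β hβ y lam Pc hPc dc hdc
end

section
/- Let (u_k)_{k≥0}, (λ_k)_{k≥1} be sequences of nonnegative reals and (S_k)_{k≥0} a nondecreasing sequence of reals with S_0 ≥ u_0². Assume that for every k ≥ 1: u_k² ≤ S_k + ∑_{i=1}^{k} λ_i u_i. Then for every k ≥ 1: u_k ≤ (1/2)∑_{i=1}^{k} λ_i + ( S_k + ((1/2)∑_{i=1}^{k} λ_i)² )^{1/2}. -/
/-!
Let `j ≤ k` be an index at which `u` attains its maximum `M` over `1, …, k`. Applying the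
recursion at `j` and bounding every `u i` by `M` gives `M ^ 2 ≤ S k + L * M` with
`L = ∑ λ i`, i.e. `(M - L / 2) ^ 2 ≤ S k + (L / 2) ^ 2`; taking square roots bounds `M`,
hence `u k`.
-/

open Finset

theorem le_half_add_sqrt_of_sq_le_add_mul {x s L : ℝ} (h : x ^ 2 ≤ s + L * x) :
    x ≤ L / 2 + √(s + (L / 2) ^ 2) := by
  have hsq : (x - L / 2) ^ 2 ≤ s + (L / 2) ^ 2 := by nlinarith
  have := Real.abs_le_sqrt hsq
  linarith [le_abs_self (x - L / 2)]

section Recursion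

variable {u lam S : ℕ → ℝ}

theorem sum_Icc_mul_mono (hu : ∀ k, 0 ≤ u k) (hlam : ∀ k, 1 ≤ k → 0 ≤ lam k) :
    Monotone fun k ↦ ∑ i ∈ Icc 1 k, lam i * u i := fun _ _ hjk ↦
  sum_le_sum_of_subset_of_nonneg (Icc_subset_Icc_right hjk) fun i hi _ ↦
    mul_nonneg (hlam i (mem_Icc.mp hi).1) (hu i)

theorem exists_le_sq_le_add_sum_mul (hu : ∀ k, 0 ≤ u k) (hlam : ∀ k, 1 ≤ k → 0 ≤ lam k)
    (hS : Monotone S)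
    (hrec : ∀ k, 1 ≤ k → u k ^ 2 ≤ S k + ∑ i ∈ Icc 1 k, lam i * u i) {k : ℕ} (hk : 1 ≤ k) :
    ∃ j, u k ≤ u j ∧ u j ^ 2 ≤ S k + (∑ i ∈ Icc 1 k, lam i) * u j := by
  obtain ⟨j, hj, hmax⟩ := exists_max_image (Icc 1 k) u ⟨k, mem_Icc.mpr ⟨hk, le_rfl⟩⟩
  obtain ⟨hj1, hjk⟩ := mem_Icc.mp hj
  refine ⟨j, hmax k (mem_Icc.mpr ⟨hk, le_rfl⟩), ?_⟩
  calc u j ^ 2 ≤ S j + ∑ i ∈ Icc 1 j, lam i * u i := hrec j hj1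
    _ ≤ S k + ∑ i ∈ Icc 1 k, lam i * u i := add_le_add (hS hjk) (sum_Icc_mul_mono hu hlam hjk)
    _ ≤ S k + ∑ i ∈ Icc 1 k, lam i * u j := by
      gcongr with i hi
      · exact hlam i (mem_Icc.mp hi).1
      · exact hmax i hi
    _ = S k + (∑ i ∈ Icc 1 k, lam i) * u j := by rw [sum_mul]

end Recursion

theorem stmt11_general (u lam S : ℕ → ℝ)
    (hu : ∀ k, 0 ≤ u k) (hlam : ∀ k, 1 ≤ k → 0 ≤ lam k)
    (hS : Monotone S)
    (hrec : ∀ k, 1 ≤ k → u k ^ 2 ≤ S k + ∑ i ∈ Finset.Icc 1 k, lam i * u i) :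
    ∀ k, 1 ≤ k →
      u k ≤ (1/2) * ∑ i ∈ Finset.Icc 1 k, lam i
        + Real.sqrt (S k + ((1/2) * ∑ i ∈ Finset.Icc 1 k, lam i) ^ 2) := by
  intro k hk
  obtain ⟨j, hkj, hj⟩ := exists_le_sq_le_add_sum_mul hu hlam hS hrec hk
  rw [one_div_mul_eq_div]
  exact hkj.trans (le_half_add_sqrt_of_sq_le_add_mul hj)

/-- Lemma 1 of Schmidt et al.: recursion lemma controlling error
accumulation. -/
theorem stmt11 (u lam S : ℕ → ℝ)
    (hu : ∀ k, 0 ≤ u k) (hlam : ∀ k, 1 ≤ k → 0 ≤ lam k)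
    (hS : Monotone S) (hS0 : u 0 ^ 2 ≤ S 0)
    (hrec : ∀ k, 1 ≤ k → u k ^ 2 ≤ S k + ∑ i ∈ Finset.Icc 1 k, lam i * u i) :
    ∀ k, 1 ≤ k →
      u k ≤ (1/2) * ∑ i ∈ Finset.Icc 1 k, lam i
        + Real.sqrt (S k + ((1/2) * ∑ i ∈ Finset.Icc 1 k, lam i) ^ 2) :=
  stmt11_general u lam S hu hlam hS hrec
end

section
/- Let g : ℝⁿ → ℝ be convex and continuous, β > 0, ε ≥ 0, and let w := x_{k+1} + λ_k/β for given x_{k+1}, λ_k ∈ ℝⁿ. Suppose y_{k+1} ∈ ℝⁿ is an ε-minimizer of ψ(y) := g(y) + (β/2)‖y − w‖², i.e. ψ(y_{k+1}) ≤ ψ(y) + ε for all y ∈ ℝⁿ. Then there exists r ∈ ℝⁿ with ‖r‖ ≤ √(2ε/β) such that β(x_{k+1} + λ_k/β − y_{k+1} − r) is an ε-subgradient of g at y_{k+1}, i.e. g(z) ≥ g(y_{k+1}) + ⟨β(x_{k+1} + λ_k/β − y_{k+1} − r), z − y_{k+1}⟩ − ε for all z ∈ ℝⁿ. -/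
/-!
The objective `ψ = g + (β/2)‖· - w‖²` is `β`-strongly convex, so on the closed ball of radius
`√(2ε/β) + 1` around the `ε`-minimizer `y` it attains a minimum `y₀` with quadratic growth
`ψ y₀ + (β/2)‖y - y₀‖² ≤ ψ y ≤ ψ y₀ + ε`. Hence `y₀` lies strictly inside the ball and is a global
minimizer, and `r = y₀ - y` satisfies the norm bound. Quadratic growth at `y₀` says that
`β(w - y₀)` is an exact subgradient of `g` at `y₀`, and `ε`-optimality of `y` moves it to an
`ε`-subgradient at `y`.
-/

open scoped RealInnerProductSpace
open Filter Metric Set Topology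

section InnerProductSpace

variable {E : Type*} [NormedAddCommGroup E] [InnerProductSpace ℝ E]
  {s t : Set E} {m ε : ℝ} {f g : E → ℝ} {w x y : E}

lemma StrongConvexOn.subset (hf : StrongConvexOn s m f) (hts : t ⊆ s) (ht : Convex ℝ t) :
    StrongConvexOn t m f :=
  ⟨ht, fun _ hx _ hy ↦ hf.2 (hts hx) (hts hy)⟩

lemma ConvexOn.strongConvexOn_add_sq_norm_sub (hg : ConvexOn ℝ s g) (m : ℝ) (w : E) :
    StrongConvexOn s m fun y ↦ g y + m / 2 * ‖y - w‖ ^ 2 := by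
  rw [strongConvexOn_iff_convex]
  refine ((hg.add (((-m) • innerₛₗ ℝ w).convexOn hg.1)).add_const (m / 2 * ‖w‖ ^ 2)).congr
    fun y _ ↦ ?_
  simp only [norm_sub_sq_real, real_inner_comm w y, Pi.add_apply, LinearMap.smul_apply,
    innerₛₗ_apply_apply, smul_eq_mul]
  ring

lemma StrongConvexOn.add_sq_norm_sub_le_of_isMinOn (hf : StrongConvexOn s m f)
    (hmin : IsMinOn f s x) (hx : x ∈ s) (hy : y ∈ s) :
    f x + m / 2 * ‖y - x‖ ^ 2 ≤ f y := by
  have hbound : ∀ t ∈ Ioo (0 : ℝ) 1, (1 - t) * (m / 2 * ‖y - x‖ ^ 2) ≤ f y - f x := by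
    rintro t ⟨ht₀, ht₁⟩
    have hconv := hf.2 hx hy (sub_nonneg.2 ht₁.le) ht₀.le (sub_add_cancel 1 t)
    have hle := isMinOn_iff.1 hmin _ (hf.1 hx hy (sub_nonneg.2 ht₁.le) ht₀.le (sub_add_cancel 1 t))
    rw [norm_sub_rev, smul_eq_mul, smul_eq_mul] at hconv
    refine le_of_mul_le_mul_left ?_ ht₀
    linarith
  have hlim : Tendsto (fun t : ℝ ↦ (1 - t) * (m / 2 * ‖y - x‖ ^ 2)) (𝓝[>] 0)
      (𝓝 (m / 2 * ‖y - x‖ ^ 2)) := by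
    have : Continuous fun t : ℝ ↦ (1 - t) * (m / 2 * ‖y - x‖ ^ 2) := by fun_prop
    simpa using this.continuousWithinAt.tendsto (x := 0) (s := Ioi 0)
  have := le_of_tendsto hlim (eventually_of_mem (Ioo_mem_nhdsGT one_pos) hbound)
  linarith

lemma StrongConvexOn.exists_isMinOn_sq_norm_sub_le [ProperSpace E]
    (hf : StrongConvexOn univ m f) (hfc : Continuous f) (hm : 0 < m) (hx : ∀ y, f x ≤ f y + ε) :
    ∃ x₀, IsMinOn f univ x₀ ∧ m / 2 * ‖x - x₀‖ ^ 2 ≤ ε := by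
  set R := √(2 * ε / m) + 1
  have hR : 0 ≤ R := by positivity
  obtain ⟨x₀, hx₀, hmin⟩ := (isCompact_closedBall x R).exists_isMinOn
    (nonempty_closedBall.2 hR) hfc.continuousOn
  have hclose : m / 2 * ‖x - x₀‖ ^ 2 ≤ ε := by
    have := (hf.subset (subset_univ _) (convex_closedBall x R)).add_sq_norm_sub_le_of_isMinOn
      hmin hx₀ (mem_closedBall_self hR)
    linarith [hx x₀]
  have hinterior : dist x₀ x < R := by
    have : ‖x - x₀‖ ≤ √(2 * ε / m) := by
      refine Real.le_sqrt_of_sq_le ?_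
      rw [le_div_iff₀ hm]
      linarith
    rw [dist_comm, dist_eq_norm]
    linarith
  have hlocal : IsLocalMin f x₀ := hmin.isLocalMin (closedBall_mem_nhds_of_mem hinterior)
  have hconv : ConvexOn ℝ univ f := hf.convexOn fun r ↦ by positivity
  exact ⟨x₀, fun z _ ↦ IsMinOn.of_isLocalMin_of_convex_univ hlocal hconv z, hclose⟩

lemma ConvexOn.add_inner_le_of_isMinOn_add_sq_norm_sub (hg : ConvexOn ℝ univ g)
    (hmin : IsMinOn (fun y ↦ g y + m / 2 * ‖y - w‖ ^ 2) univ x) (z : E) :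
    g x + ⟪m • (w - x), z - x⟫ ≤ g z := by
  have hgrowth := (hg.strongConvexOn_add_sq_norm_sub m w).add_sq_norm_sub_le_of_isMinOn hmin
    (mem_univ x) (mem_univ z)
  have hexpand : ‖z - w‖ ^ 2 = ‖z - x‖ ^ 2 - 2 * ⟪z - x, w - x⟫ + ‖x - w‖ ^ 2 := by
    rw [norm_sub_rev x w, ← norm_sub_sq_real, sub_sub_sub_cancel_right]
  rw [real_inner_smul_left, real_inner_comm]
  linear_combination hgrowth + m / 2 * hexpand

lemma le_add_inner_of_add_sq_norm_sub_le (hm : 0 ≤ m)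
    (h : g y + m / 2 * ‖y - w‖ ^ 2 ≤ g x + m / 2 * ‖x - w‖ ^ 2 + ε) :
    g y ≤ g x + ⟪m • (w - x), y - x⟫ + ε := by
  have hexpand : ‖y - w‖ ^ 2 = ‖y - x‖ ^ 2 - 2 * ⟪y - x, w - x⟫ + ‖x - w‖ ^ 2 := by
    rw [norm_sub_rev x w, ← norm_sub_sq_real, sub_sub_sub_cancel_right]
  have hnonneg : 0 ≤ m / 2 * ‖y - x‖ ^ 2 := by positivity
  rw [real_inner_smul_left, real_inner_comm]
  linear_combination h - m / 2 * hexpand + hnonneg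

end InnerProductSpace

theorem stmt14_general {n : ℕ} (g : EuclideanSpace ℝ (Fin n) → ℝ)
    (hgconv : ConvexOn ℝ Set.univ g) (hgcont : Continuous g)
    (β ε : ℝ) (hβ : 0 < β)
    (xk1 lamk yk1 : EuclideanSpace ℝ (Fin n))
    (hmin : ∀ y, g yk1 + (β/2) * ‖yk1 - (xk1 + (1/β) • lamk)‖^2
      ≤ g y + (β/2) * ‖y - (xk1 + (1/β) • lamk)‖^2 + ε) :
    ∃ r : EuclideanSpace ℝ (Fin n), ‖r‖ ≤ Real.sqrt (2*ε/β) ∧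
      ∀ z, g z ≥ g yk1 + ⟪β • (xk1 + (1/β) • lamk - yk1 - r), z - yk1⟫ - ε := by
  set w := xk1 + (1/β) • lamk
  obtain ⟨y₀, hy₀, hclose⟩ :=
    (hgconv.strongConvexOn_add_sq_norm_sub β w).exists_isMinOn_sq_norm_sub_le (by fun_prop) hβ hmin
  refine ⟨y₀ - yk1, Real.le_sqrt_of_sq_le ?_, fun z ↦ ?_⟩
  · rw [le_div_iff₀ hβ, norm_sub_rev]
    linarith
  · have hsubgrad := hgconv.add_inner_le_of_isMinOn_add_sq_norm_sub hy₀ z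
    have hnear := le_add_inner_of_add_sq_norm_sub_le hβ.le (hmin y₀)
    rw [sub_sub_sub_cancel_right, ← sub_sub_sub_cancel_right z yk1 y₀, inner_sub_right]
    linarith

/-- Lemma on ε-minimizers of the y-subproblem: an ε-minimizer of
`ψ(y) = g(y) + (β/2)‖y - (x_{k+1} + λ_k/β)‖²` yields an ε-subgradient of `g`
of the stated form. -/
theorem stmt14 {n : ℕ} (g : EuclideanSpace ℝ (Fin n) → ℝ)
    (hgconv : ConvexOn ℝ Set.univ g) (hgcont : Continuous g)
    (β ε : ℝ) (hβ : 0 < β) (hε : 0 ≤ ε)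
    (xk1 lamk yk1 : EuclideanSpace ℝ (Fin n))
    (hmin : ∀ y, g yk1 + (β/2) * ‖yk1 - (xk1 + (1/β) • lamk)‖^2
      ≤ g y + (β/2) * ‖y - (xk1 + (1/β) • lamk)‖^2 + ε) :
    ∃ r : EuclideanSpace ℝ (Fin n), ‖r‖ ≤ Real.sqrt (2*ε/β) ∧
      ∀ z, g z ≥ g yk1 + ⟪β • (xk1 + (1/β) • lamk - yk1 - r), z - yk1⟫ - ε :=
  stmt14_general g hgconv hgcont β ε hβ xk1 lamk yk1 hmin
end

section
/- Let β > 0, ε_k, ε_{k+1} ≥ 0, g : ℝⁿ → ℝ, and let x_{k+1}, y_k, y_{k+1}, λ_k, q_{k+1}, r_k, r_{k+1}, v, λ^μ ∈ ℝⁿ. Set λ_{k+1} := λ_k + β(x_{k+1} − y_{k+1}). Assume: λ_k − βr_k is an ε_k-subgradient of g at y_k, and λ_{k+1} − βr_{k+1} is an ε_{k+1}-subgradient of g at y_{k+1}. Then ⟨−λ_k − β(x_{k+1} − y_k) − βq_{k+1}, x_{k+1} − v⟩ + ⟨λ_{k+1} − βr_{k+1}, y_{k+1} − v⟩ + ⟨λ^μ,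 x_{k+1} − y_{k+1}⟩ ≤ (1/(2β))‖λ_k − λ^μ‖² − (1/(2β))‖λ_{k+1} − λ^μ‖² + (β/2)‖v − y_k‖² − (β/2)‖v − y_{k+1}‖² − (1/(2β))‖λ_{k+1} − λ_k‖² − (β/2)‖y_k − y_{k+1}‖² − β⟨r_{k+1} − r_k, y_{k+1} − y_k⟩ − β⟨r_{k+1}, y_{k+1} − v⟩ + ε_k + ε_{k+1} − β⟨q_{k+1}, x_{k+1} − v⟩. -/
open scoped RealInnerProductSpace

/-- Lemma 3.5 for inexact ACVI: per-step inequality with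
inexactness perturbations `q` and `r`, reference point `v = x^μ = y^μ` and
multiplier `λ^μ`. -/
theorem stmt15 {n : ℕ} (β εk εk1 : ℝ) (hβ : 0 < β) (hεk : 0 ≤ εk) (hεk1 : 0 ≤ εk1)
    (g : EuclideanSpace ℝ (Fin n) → ℝ)
    (xk1 yk yk1 lamk lamk1 qk1 rk rk1 v lamμ : EuclideanSpace ℝ (Fin n))
    (hlam : lamk1 = lamk + β • (xk1 - yk1))
    (hgk : ∀ z, g z ≥ g yk + ⟪lamk - β • rk, z - yk⟫ - εk)
    (hgk1 : ∀ z, g z ≥ g yk1 + ⟪lamk1 - β • rk1, z - yk1⟫ - εk1) :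
    ⟪-lamk - β • (xk1 - yk) - β • qk1, xk1 - v⟫
      + ⟪lamk1 - β • rk1, yk1 - v⟫ + ⟪lamμ, xk1 - yk1⟫
    ≤ (1/(2*β)) * ‖lamk - lamμ‖^2 - (1/(2*β)) * ‖lamk1 - lamμ‖^2
      + (β/2) * ‖v - yk‖^2 - (β/2) * ‖v - yk1‖^2
      - (1/(2*β)) * ‖lamk1 - lamk‖^2 - (β/2) * ‖yk - yk1‖^2
      - β * ⟪rk1 - rk, yk1 - yk⟫ - β * ⟪rk1, yk1 - v⟫
      + εk + εk1 - β * ⟪qk1, xk1 - v⟫ := by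
  have h1 := hgk yk1
  have h2 := hgk1 yk
  have hS : -εk - εk1 ≤ ⟪lamk1 - lamk - β • (rk1 - rk), yk1 - yk⟫ := by
    have e : ⟪lamk1 - lamk - β • (rk1 - rk), yk1 - yk⟫
        = -(⟪lamk - β • rk, yk1 - yk⟫ + ⟪lamk1 - β • rk1, yk - yk1⟫) := by
      simp only [inner_sub_left, inner_sub_right, real_inner_smul_left]
      ring
    rw [e]
    linarith
  have key : ⟪-lamk - β • (xk1 - yk) - β • qk1, xk1 - v⟫
      + ⟪lamk1 - β • rk1, yk1 - v⟫ + ⟪lamμ, xk1 - yk1⟫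
      = (1/(2*β)) * ‖lamk - lamμ‖^2 - (1/(2*β)) * ‖lamk1 - lamμ‖^2
      + (β/2) * ‖v - yk‖^2 - (β/2) * ‖v - yk1‖^2
      - (1/(2*β)) * ‖lamk1 - lamk‖^2 - (β/2) * ‖yk - yk1‖^2
      - β * ⟪rk1 - rk, yk1 - yk⟫ - β * ⟪rk1, yk1 - v⟫
      - β * ⟪qk1, xk1 - v⟫
      - ⟪lamk1 - lamk - β • (rk1 - rk), yk1 - yk⟫ := by
    subst hlam
    simp only [← real_inner_self_eq_norm_sq, inner_sub_left, inner_sub_right,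
      inner_add_left, inner_add_right, inner_neg_left, real_inner_smul_left,
      real_inner_smul_right,
      real_inner_comm yk xk1, real_inner_comm yk1 xk1, real_inner_comm lamk xk1,
      real_inner_comm qk1 xk1, real_inner_comm rk xk1, real_inner_comm rk1 xk1,
      real_inner_comm v xk1, real_inner_comm lamμ xk1,
      real_inner_comm yk1 yk, real_inner_comm lamk yk, real_inner_comm qk1 yk,
      real_inner_comm rk yk, real_inner_comm rk1 yk, real_inner_comm v yk,
      real_inner_comm lamμ yk,
      real_inner_comm lamk yk1, real_inner_comm qk1 yk1, real_inner_comm rk yk1,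
      real_inner_comm rk1 yk1, real_inner_comm v yk1, real_inner_comm lamμ yk1,
      real_inner_comm qk1 lamk, real_inner_comm rk lamk, real_inner_comm rk1 lamk,
      real_inner_comm v lamk, real_inner_comm lamμ lamk,
      real_inner_comm rk qk1, real_inner_comm rk1 qk1, real_inner_comm v qk1,
      real_inner_comm lamμ qk1,
      real_inner_comm rk1 rk, real_inner_comm v rk, real_inner_comm lamμ rk,
      real_inner_comm v rk1, real_inner_comm lamμ rk1,
      real_inner_comm lamμ v]
    field_simp
    ring
  linarith
end

section
/- Let β > 0, L ≥ 0, σ_k, σ_{k+1}, ε_k, ε_{k+1} ≥ 0, S ⊆ ℝⁿ, F : ℝⁿ → ℝⁿ, g : ℝⁿ → ℝ, and let x_k, x_{k+1}, y_{k−1}, y_k, y_{k+1}, λ_{k−1}, q_k, q_{k+1}, r_k, r_{k+1} ∈ ℝⁿ with x_k + q_k, x_{k+1} + q_{k+1} ∈ S. Set λ_k := λ_{k−1} + β(x_k − y_k) and λ_{k+1} := λ_k + β(x_{k+1} − y_{k+1}). Assume: (a) ‖q_k‖ ≤ σ_k, ‖q_{k+1}‖ ≤ σ_{k+1}, ‖r_k‖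 ≤ √(2ε_k/β), ‖r_{k+1}‖ ≤ √(2ε_{k+1}/β); (b) −λ_{k−1} − β(x_k − y_{k−1}) − βq_k is a subgradient of x ↦ ⟨F(x_k), x⟩ at x_k + q_k relative to S, and −λ_k − β(x_{k+1} − y_k) − βq_{k+1} is a subgradient of x ↦ ⟨F(x_{k+1}), x⟩ at x_{k+1} + q_{k+1} relative to S; (c) λ_k − βr_k is an ε_k-subgradient of g at y_k and λ_{k+1} − βr_{k+1} is an ε_{k+1}-subgradient of g at y_{k+1}; (d) ⟨F(x_{k+1}) − F(x_k), x_{k+1} − x_k⟩ ≥ 0 and ‖F(x_{k+1}) − F(x_k)‖ ≤ L‖x_{k+1} − x_k‖. Then (1/(2β))‖λ_{k+1} − λ_k‖² + (β/2)‖y_{k+1} − y_k‖² ≤ (1/(2β))‖λ_k − λ_{k−1}‖² + (β/2)‖y_k − y_{k−1}‖² + (σ_{k+1} + σ_k)·( β‖y_k − y_{k−1}‖ + (2β + L)‖y_{k+1} − y_k‖ + (2 + L/β)‖λ_{k+1} − λ_k‖ + (L/β + 1)‖λ_k − λ_{k−1}‖ ) + √(2β)(√ε_k + √ε_{k+1})‖y_{k+1}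 − y_k‖ + ε_k + ε_{k+1}. -/
open scoped RealInnerProductSpace

/-!
With `a = λₖ₊₁ - λₖ`, `b = λₖ - λₖ₋₁`, `u = yₖ₊₁ - yₖ`, `v = yₖ - yₖ₋₁`, `q = qₖ₊₁ - qₖ` and
`d = xₖ₊₁ - xₖ`, the multiplier updates give `β d = a - b + β u`.
Testing each `x`-subgradient inequality at the other iterate and adding them, monotonicity and
Lipschitz continuity of `F` give `⟪a + β (u - v) + β q, d + q⟫ ≤ L ‖d‖ σ`; doing the same with
the two `ε`-subgradient inequalities of `g` bounds `-⟪a, u⟫`.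
The polarization identity
`2 ⟪a + β (u - v), a - b + β u⟫ = ‖a‖² - ‖b‖² + β² (‖u‖² - ‖v‖²) + 2 β ⟪a, u⟫ + ‖a - b + β (u - v)‖²`
shows that `⟪a + β (u - v), d⟫` dominates `E(a, u) - E(b, v) + ⟪a, u⟫`, where
`E(a, u) = ‖a‖²/(2β) + β‖u‖²/2`, and removing the perturbation `q` costs at most `σ (‖a + β (u - v)‖ + β ‖d‖)`.
-/

theorem Real.mul_sqrt_two_mul_div {β : ℝ} (hβ : 0 ≤ β) (ε : ℝ) :
    β * √(2 * ε / β) = √(2 * β) * √ε := by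
  nth_rewrite 1 [← Real.sqrt_sq hβ]
  rw [← Real.sqrt_mul (sq_nonneg β), ← Real.sqrt_mul (by positivity)]
  rcases hβ.eq_or_lt with rfl | hβ
  · simp
  · congr 1; field_simp

section AcviStep

variable {E : Type*} [NormedAddCommGroup E] [InnerProductSpace ℝ E]

def IsSubgradientWithin (f : E → ℝ) (S : Set E) (x w : E) : Prop :=
  ∀ z ∈ S, f z ≥ f x + ⟪w, z - x⟫

def IsEpsSubgradient (f : E → ℝ) (ε : ℝ) (x w : E) : Prop :=
  ∀ z, f z ≥ f x + ⟪w, z - x⟫ - ε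

noncomputable def stepEnergy (β : ℝ) (a u : E) : ℝ :=
  1 / (2 * β) * ‖a‖ ^ 2 + β / 2 * ‖u‖ ^ 2

theorem IsSubgradientWithin.inner_sub_le_inner_sub {S : Set E} {c₀ c₁ p₀ p₁ w₀ w₁ : E}
    (hp₀ : p₀ ∈ S) (hp₁ : p₁ ∈ S)
    (h₀ : IsSubgradientWithin (fun z ↦ ⟪c₀, z⟫) S p₀ w₀)
    (h₁ : IsSubgradientWithin (fun z ↦ ⟪c₁, z⟫) S p₁ w₁) :
    ⟪c₁ - c₀, p₁ - p₀⟫ ≤ ⟪w₁ - w₀, p₁ - p₀⟫ := by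
  have h₀₁ := h₀ p₁ hp₁
  have h₁₀ := h₁ p₀ hp₀
  simp only [inner_sub_left, inner_sub_right] at h₀₁ h₁₀ ⊢
  linarith

theorem IsEpsSubgradient.neg_add_le_inner_sub {f : E → ℝ} {ε₀ ε₁ : ℝ} {p₀ p₁ w₀ w₁ : E}
    (h₀ : IsEpsSubgradient f ε₀ p₀ w₀) (h₁ : IsEpsSubgradient f ε₁ p₁ w₁) :
    -(ε₀ + ε₁) ≤ ⟪w₁ - w₀, p₁ - p₀⟫ := by
  have h₀₁ := h₀ p₁
  have h₁₀ := h₁ p₀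
  simp only [inner_sub_left, inner_sub_right] at h₀₁ h₁₀ ⊢
  linarith

theorem neg_mul_le_inner_add_of_monotone_lipschitz {L σ : ℝ} {Δ d q : E}
    (hmono : 0 ≤ ⟪Δ, d⟫) (hlip : ‖Δ‖ ≤ L * ‖d‖) (hq : ‖q‖ ≤ σ) :
    -(L * ‖d‖ * σ) ≤ ⟪Δ, d + q⟫ := by
  have hΔq : ‖Δ‖ * ‖q‖ ≤ L * ‖d‖ * σ :=
    mul_le_mul hlip hq (norm_nonneg q) ((norm_nonneg Δ).trans hlip)
  have := neg_le_of_abs_le (abs_real_inner_le_norm Δ q)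
  rw [inner_add_right]
  linarith

theorem inner_le_inner_add_smul_add {β σ : ℝ} {A d q : E} (hβ : 0 ≤ β) (hq : ‖q‖ ≤ σ) :
    ⟪A, d⟫ ≤ ⟪A + β • q, d + q⟫ + σ * ‖A‖ + β * σ * ‖d‖ := by
  have hAq : -⟪A, q⟫ ≤ σ * ‖A‖ := by
    nlinarith [neg_le_of_abs_le (abs_real_inner_le_norm A q), norm_nonneg A]
  have hqd : -⟪q, d⟫ ≤ σ * ‖d‖ := by
    nlinarith [neg_le_of_abs_le (abs_real_inner_le_norm q d), norm_nonneg d]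
  have hqq : 0 ≤ ⟪q, q⟫ := real_inner_self_nonneg
  simp only [inner_add_left, inner_add_right, real_inner_smul_left]
  nlinarith [mul_le_mul_of_nonneg_left hqd hβ, mul_nonneg hβ hqq]

theorem two_mul_inner_add_smul_sub (β : ℝ) (a b u v : E) :
    2 * ⟪a + β • (u - v), a - b + β • u⟫
      = ‖a‖ ^ 2 - ‖b‖ ^ 2 + β ^ 2 * (‖u‖ ^ 2 - ‖v‖ ^ 2) + 2 * β * ⟪a, u⟫
        + ‖a - b + β • (u - v)‖ ^ 2 := by
  simp only [← real_inner_self_eq_norm_sq, inner_add_left, inner_add_right, inner_sub_left,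
    inner_sub_right, real_inner_smul_left, real_inner_smul_right]
  rw [real_inner_comm a b, real_inner_comm a u, real_inner_comm a v, real_inner_comm b u,
    real_inner_comm b v, real_inner_comm u v]
  ring

theorem inner_smul_sub_le_of_norm_le_sqrt {β ε₀ ε₁ : ℝ} {r₀ r₁ u : E} (hβ : 0 ≤ β)
    (hr₀ : ‖r₀‖ ≤ √(2 * ε₀ / β)) (hr₁ : ‖r₁‖ ≤ √(2 * ε₁ / β)) :
    ⟪β • (r₁ - r₀), u⟫ ≤ √(2 * β) * (√ε₀ + √ε₁) * ‖u‖ := by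
  have hr : ‖β • (r₁ - r₀)‖ ≤ β * √(2 * ε₀ / β) + β * √(2 * ε₁ / β) := by
    rw [norm_smul, Real.norm_of_nonneg hβ]
    nlinarith [norm_sub_le r₁ r₀]
  calc ⟪β • (r₁ - r₀), u⟫ ≤ ‖β • (r₁ - r₀)‖ * ‖u‖ := real_inner_le_norm _ _
    _ ≤ (β * √(2 * ε₀ / β) + β * √(2 * ε₁ / β)) * ‖u‖ := by gcongr
    _ = √(2 * β) * (√ε₀ + √ε₁) * ‖u‖ := by
      rw [Real.mul_sqrt_two_mul_div hβ, Real.mul_sqrt_two_mul_div hβ]; ring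

theorem energy_sub_add_inner_le {β : ℝ} {a b u v d : E} (hβ : 0 < β)
    (hd : β • d = a - b + β • u) :
    stepEnergy β a u - stepEnergy β b v + ⟪a, u⟫ ≤ ⟪a + β • (u - v), d⟫ := by
  have key := two_mul_inner_add_smul_sub β a b u v
  rw [← hd, real_inner_smul_right] at key
  refine le_of_mul_le_mul_left ?_ (by positivity : 0 < 2 * β)
  calc 2 * β * (stepEnergy β a u - stepEnergy β b v + ⟪a, u⟫)
        = ‖a‖ ^ 2 - ‖b‖ ^ 2 + β ^ 2 * (‖u‖ ^ 2 - ‖v‖ ^ 2) + 2 * β * ⟪a, u⟫ := by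
          unfold stepEnergy; field_simp; ring
    _ ≤ 2 * β * ⟪a + β • (u - v), d⟫ := by nlinarith [sq_nonneg ‖a - b + β • (u - v)‖]

theorem energy_le_of_step_estimates {β L σ C ε : ℝ} {a b u v q d : E} (hβ : 0 < β)
    (hL : 0 ≤ L) (hq : ‖q‖ ≤ σ) (hd : β • d = a - b + β • u)
    (hx : ⟪a + β • (u - v) + β • q, d + q⟫ ≤ L * ‖d‖ * σ)
    (hy : -⟪a, u⟫ ≤ C * ‖u‖ + ε) :
    stepEnergy β a u
      ≤ stepEnergy β b v
        + σ * (β * ‖v‖ + (2 * β + L) * ‖u‖ + (2 + L / β) * ‖a‖ + (L / β + 1) * ‖b‖)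
        + C * ‖u‖ + ε := by
  set A := a + β • (u - v)
  have hσ : 0 ≤ σ := (norm_nonneg q).trans hq
  have hA : ‖A‖ ≤ ‖a‖ + β * ‖u‖ + β * ‖v‖ :=
    calc ‖A‖ ≤ ‖a‖ + β * ‖u - v‖ := by
          simpa [A, norm_smul, abs_of_pos hβ] using norm_add_le a (β • (u - v))
      _ ≤ ‖a‖ + β * (‖u‖ + ‖v‖) := by gcongr; exact norm_sub_le u v
      _ = ‖a‖ + β * ‖u‖ + β * ‖v‖ := by ring
  have hβd : β * ‖d‖ ≤ ‖a‖ + ‖b‖ + β * ‖u‖ :=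
    calc β * ‖d‖ = ‖a - b + β • u‖ := by rw [← hd, norm_smul, Real.norm_of_nonneg hβ.le]
      _ ≤ ‖a - b‖ + β * ‖u‖ := by
          simpa [norm_smul, abs_of_pos hβ] using norm_add_le (a - b) (β • u)
      _ ≤ ‖a‖ + ‖b‖ + β * ‖u‖ := by gcongr; exact norm_sub_le a b
  have hdn : (L + β) * ‖d‖ ≤ (L / β + 1) * (‖a‖ + ‖b‖ + β * ‖u‖) :=
    calc (L + β) * ‖d‖ = (L / β + 1) * (β * ‖d‖) := by field_simp
      _ ≤ (L / β + 1) * (‖a‖ + ‖b‖ + β * ‖u‖) := by gcongr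
  have hpert := inner_le_inner_add_smul_add (A := A) (d := d) hβ.le hq
  have henergy := energy_sub_add_inner_le (v := v) hβ hd
  calc stepEnergy β a u
      ≤ stepEnergy β b v + σ * (‖A‖ + (L + β) * ‖d‖) + C * ‖u‖ + ε := by
        linarith
    _ ≤ stepEnergy β b v
          + σ * ((‖a‖ + β * ‖u‖ + β * ‖v‖) + (L / β + 1) * (‖a‖ + ‖b‖ + β * ‖u‖))
          + C * ‖u‖ + ε := by gcongr
    _ = _ := by field_simp; ring

end AcviStep

theorem stmt16_general {n : ℕ} (β L σk σk1 εk εk1 : ℝ)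
    (hβ : 0 < β) (hL : 0 ≤ L)
    (S : Set (EuclideanSpace ℝ (Fin n)))
    (F : EuclideanSpace ℝ (Fin n) → EuclideanSpace ℝ (Fin n))
    (g : EuclideanSpace ℝ (Fin n) → ℝ)
    (xk xk1 ykm1 yk yk1 lamkm1 lamk lamk1 qk qk1 rk rk1 : EuclideanSpace ℝ (Fin n))
    (hxkS : xk + qk ∈ S) (hxk1S : xk1 + qk1 ∈ S)
    (hlamk : lamk = lamkm1 + β • (xk - yk))
    (hlamk1 : lamk1 = lamk + β • (xk1 - yk1))
    (hqk : ‖qk‖ ≤ σk) (hqk1 : ‖qk1‖ ≤ σk1)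
    (hrk : ‖rk‖ ≤ Real.sqrt (2*εk/β)) (hrk1 : ‖rk1‖ ≤ Real.sqrt (2*εk1/β))
    (hfsubk : ∀ z ∈ S,
      ⟪F xk, z⟫ ≥ ⟪F xk, xk + qk⟫
        + ⟪-lamkm1 - β • (xk - ykm1) - β • qk, z - (xk + qk)⟫)
    (hfsubk1 : ∀ z ∈ S,
      ⟪F xk1, z⟫ ≥ ⟪F xk1, xk1 + qk1⟫
        + ⟪-lamk - β • (xk1 - yk) - β • qk1, z - (xk1 + qk1)⟫)
    (hgk : ∀ z, g z ≥ g yk + ⟪lamk - β • rk, z - yk⟫ - εk)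
    (hgk1 : ∀ z, g z ≥ g yk1 + ⟪lamk1 - β • rk1, z - yk1⟫ - εk1)
    (hmono : 0 ≤ ⟪F xk1 - F xk, xk1 - xk⟫)
    (hlip : ‖F xk1 - F xk‖ ≤ L * ‖xk1 - xk‖) :
    (1/(2*β)) * ‖lamk1 - lamk‖^2 + (β/2) * ‖yk1 - yk‖^2
      ≤ (1/(2*β)) * ‖lamk - lamkm1‖^2 + (β/2) * ‖yk - ykm1‖^2
        + (σk1 + σk) * (β * ‖yk - ykm1‖ + (2*β + L) * ‖yk1 - yk‖
            + (2 + L/β) * ‖lamk1 - lamk‖ + (L/β + 1) * ‖lamk - lamkm1‖)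
        + Real.sqrt (2*β) * (Real.sqrt εk + Real.sqrt εk1) * ‖yk1 - yk‖
        + εk + εk1 := by
  have hq : ‖qk1 - qk‖ ≤ σk1 + σk := (norm_sub_le _ _).trans (add_le_add hqk1 hqk)
  have hx : ⟪(lamk1 - lamk) + β • ((yk1 - yk) - (yk - ykm1)) + β • (qk1 - qk),
      (xk1 - xk) + (qk1 - qk)⟫ ≤ L * ‖xk1 - xk‖ * (σk1 + σk) := by
    have hF := IsSubgradientWithin.inner_sub_le_inner_sub hxkS hxk1S hfsubk hfsubk1
    have hFx := neg_mul_le_inner_add_of_monotone_lipschitz hmono hlip hq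
    rw [show xk1 + qk1 - (xk + qk) = (xk1 - xk) + (qk1 - qk) by abel,
      show -lamk - β • (xk1 - yk) - β • qk1 - (-lamkm1 - β • (xk - ykm1) - β • qk)
        = -((lamk1 - lamk) + β • ((yk1 - yk) - (yk - ykm1)) + β • (qk1 - qk)) by
          rw [hlamk1, hlamk]; module,
      inner_neg_left] at hF
    linarith
  have hy : -⟪lamk1 - lamk, yk1 - yk⟫
      ≤ Real.sqrt (2*β) * (Real.sqrt εk + Real.sqrt εk1) * ‖yk1 - yk‖ + (εk + εk1) := by
    have hg := IsEpsSubgradient.neg_add_le_inner_sub hgk hgk1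
    have hr := inner_smul_sub_le_of_norm_le_sqrt (u := yk1 - yk) hβ.le hrk1 hrk
    rw [show lamk1 - β • rk1 - (lamk - β • rk) = (lamk1 - lamk) + β • (rk - rk1) by module,
      inner_add_left] at hg
    linarith
  have := energy_le_of_step_estimates (b := lamk - lamkm1) hβ hL hq
    (by rw [hlamk1, hlamk]; module) hx hy
  unfold stepEnergy at this
  linarith

/-- Lemma 3.7 for inexact ACVI: approximate non-increment of
the per-step quantity along two consecutive inexact ACVI steps. -/
theorem stmt16 {n : ℕ} (β L σk σk1 εk εk1 : ℝ)
    (hβ : 0 < β) (hL : 0 ≤ L) (hσk : 0 ≤ σk) (hσk1 : 0 ≤ σk1)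
    (hεk : 0 ≤ εk) (hεk1 : 0 ≤ εk1)
    (S : Set (EuclideanSpace ℝ (Fin n)))
    (F : EuclideanSpace ℝ (Fin n) → EuclideanSpace ℝ (Fin n))
    (g : EuclideanSpace ℝ (Fin n) → ℝ)
    (xk xk1 ykm1 yk yk1 lamkm1 lamk lamk1 qk qk1 rk rk1 : EuclideanSpace ℝ (Fin n))
    (hxkS : xk + qk ∈ S) (hxk1S : xk1 + qk1 ∈ S)
    (hlamk : lamk = lamkm1 + β • (xk - yk))
    (hlamk1 : lamk1 = lamk + β • (xk1 - yk1))
    (hqk : ‖qk‖ ≤ σk) (hqk1 : ‖qk1‖ ≤ σk1)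
    (hrk : ‖rk‖ ≤ Real.sqrt (2*εk/β)) (hrk1 : ‖rk1‖ ≤ Real.sqrt (2*εk1/β))
    (hfsubk : ∀ z ∈ S,
      ⟪F xk, z⟫ ≥ ⟪F xk, xk + qk⟫
        + ⟪-lamkm1 - β • (xk - ykm1) - β • qk, z - (xk + qk)⟫)
    (hfsubk1 : ∀ z ∈ S,
      ⟪F xk1, z⟫ ≥ ⟪F xk1, xk1 + qk1⟫
        + ⟪-lamk - β • (xk1 - yk) - β • qk1, z - (xk1 + qk1)⟫)
    (hgk : ∀ z, g z ≥ g yk + ⟪lamk - β • rk, z - yk⟫ - εk)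
    (hgk1 : ∀ z, g z ≥ g yk1 + ⟪lamk1 - β • rk1, z - yk1⟫ - εk1)
    (hmono : 0 ≤ ⟪F xk1 - F xk, xk1 - xk⟫)
    (hlip : ‖F xk1 - F xk‖ ≤ L * ‖xk1 - xk‖) :
    (1/(2*β)) * ‖lamk1 - lamk‖^2 + (β/2) * ‖yk1 - yk‖^2
      ≤ (1/(2*β)) * ‖lamk - lamkm1‖^2 + (β/2) * ‖yk - ykm1‖^2
        + (σk1 + σk) * (β * ‖yk - ykm1‖ + (2*β + L) * ‖yk1 - yk‖
            + (2 + L/β) * ‖lamk1 - lamk‖ + (L/β + 1) * ‖lamk - lamkm1‖)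
        + Real.sqrt (2*β) * (Real.sqrt εk + Real.sqrt εk1) * ‖yk1 - yk‖
        + εk + εk1 :=
  stmt16_general β L σk σk1 εk εk1 hβ hL S F g xk xk1 ykm1 yk yk1 lamkm1 lamk lamk1 qk qk1 rk rk1
    hxkS hxk1S hlamk hlamk1 hqk hqk1 hrk hrk1 hfsubk hfsubk1 hgk hgk1 hmono hlip
end

section
/- Let μ > 0, β > 0, c ∈ ℝ, w ∈ ℝⁿ, and let φ_1, …, φ_m : ℝⁿ → ℝ be convex and continuous. Define ℘₁(z) := −μ·log(−z) for z < 0, and ℘₂(z) := −μ·log(−z) if z ≤ −e^{−c/μ} and ℘₂(z) := μ·e^{c/μ}·z + μ + c otherwise. Let ψ̃(y) := ∑_{i=1}^m ℘₂(φ_i(y)) + (β/2)‖y − w‖² (defined on all of ℝⁿ) and ψ(y) := ∑_{i=1}^m ℘₁(φ_i(y)) + (β/2)‖y − w‖² (defined on the open set {y : φ_i(y) < 0 for all i}). For each i let τ_i := inf_{y ∈ ℝⁿ} [ ∑_{j≠i} ℘₂(φ_j(y)) + (β/2)‖y − w‖² ]. Suppose there exists y₀ with φ_i(y₀) < 0 for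 all i such that c ≥ ψ(y₀) − τ_i for every i. Then every minimizer ỹ of ψ̃ over ℝⁿ satisfies φ_i(ỹ) ≤ −e^{−c/μ} for all i, and ỹ is also a minimizer of ψ over {y : φ_i(y) < 0 for all i}; in particular the minimizers of ψ̃ and of ψ coincide. -/
/-!
The extended barrier `℘₂` agrees with `℘₁` up to the breakpoint `z₀ = -e^{-c/μ}`, lies
below `℘₁` (its affine piece is a tangent line of the convex function `℘₁`) and exceeds `c`
beyond `z₀`. Hence `ψ̃ ≤ ψ` on the feasible set, and at a minimiser `ỹ` of `ψ̃` a constraint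
with `φᵢ(ỹ) > z₀` would give `ψ̃(ỹ) > c + (ψ(y₀) - c) = ψ(y₀) ≥ ψ̃(y₀)`. So
`ψ(ỹ) = ψ̃(ỹ) ≤ ψ̃(y) ≤ ψ(y)` for every feasible `y`. For the converse inclusion a minimiser
of `ψ̃` must exist: `ψ̃` is continuous and coercive, because `℘₂` dominates its tangent line
and the convex `φᵢ` have affine minorants.
-/

open Real Set Filter Topology

noncomputable section

/-- The tangent line of `z ↦ -μ log (-z)` at `z₀ = -exp (-c / μ)`, where the barrier
equals `c`. -/
def logBarrierTangent (μ c z : ℝ) : ℝ := μ * exp (c / μ) * z + μ + c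

def extLogBarrier (μ c z : ℝ) : ℝ :=
  if z ≤ -exp (-c / μ) then -μ * log (-z) else logBarrierTangent μ c z

section Barrier

variable {μ c z : ℝ}

lemma logBarrierTangent_le (hμ : 0 < μ) (hz : z < 0) :
    logBarrierTangent μ c z ≤ -μ * log (-z) := by
  have h := add_one_le_exp (log (-z) + c / μ)
  rw [exp_add, exp_log (neg_pos.mpr hz)] at h
  have h' := mul_le_mul_of_nonneg_left h hμ.le
  have hc : μ * (c / μ) = c := mul_div_cancel₀ c hμ.ne'
  unfold logBarrierTangent
  nlinarith

lemma logBarrierTangent_le_extLogBarrier (hμ : 0 < μ) (z : ℝ) :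
    logBarrierTangent μ c z ≤ extLogBarrier μ c z := by
  unfold extLogBarrier
  split_ifs with h
  · exact logBarrierTangent_le hμ (h.trans_lt (neg_neg_iff_pos.mpr (exp_pos _)))
  · rfl

lemma extLogBarrier_le (hμ : 0 < μ) (hz : z < 0) : extLogBarrier μ c z ≤ -μ * log (-z) := by
  unfold extLogBarrier
  split_ifs
  · rfl
  · exact logBarrierTangent_le hμ hz

lemma extLogBarrier_of_le (hz : z ≤ -exp (-c / μ)) : extLogBarrier μ c z = -μ * log (-z) :=
  if_pos hz

lemma exp_div_mul_exp_neg_div (c μ : ℝ) : exp (c / μ) * exp (-c / μ) = 1 := by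
  rw [← exp_add, neg_div, add_neg_cancel, exp_zero]

lemma lt_extLogBarrier (hμ : 0 < μ) (hz : -exp (-c / μ) < z) : c < extLogBarrier μ c z := by
  rw [extLogBarrier, if_neg hz.not_ge, logBarrierTangent]
  have hone := exp_div_mul_exp_neg_div c μ
  have hpos : 0 < μ * exp (c / μ) * (z + exp (-c / μ)) :=
    mul_pos (mul_pos hμ (exp_pos _)) (by linarith)
  nlinarith

lemma continuous_extLogBarrier (hμ : μ ≠ 0) : Continuous (extLogBarrier μ c) := by
  refine continuous_if_le continuous_id continuous_const ?_
    (by unfold logBarrierTangent; fun_prop) ?_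
  · refine continuousOn_const.mul (continuousOn_id.neg.log fun z hz => ?_)
    have : z < 0 := (show z ≤ _ from hz).trans_lt (neg_neg_iff_pos.mpr (exp_pos _))
    exact neg_ne_zero.mpr this.ne
  · rintro z (rfl : z = -exp (-c / μ))
    rw [neg_neg, log_exp, logBarrierTangent]
    linear_combination mul_div_cancel₀ c hμ + μ * exp_div_mul_exp_neg_div c μ

end Barrier

section Coercive

variable {E : Type*} [NormedAddCommGroup E]

lemma tendsto_cocompact_atTop_of_quadratic_le [ProperSpace E] {f : E → ℝ} {A K b : ℝ}
    (hb : 0 < b) (hf : ∀ y, b * ‖y‖ ^ 2 - K * ‖y‖ - A ≤ f y) :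
    Tendsto f (cocompact E) atTop := by
  have hq : Tendsto (fun r : ℝ => r * (b * r - K) - A) atTop atTop :=
    tendsto_atTop_add_const_right _ _ <| tendsto_id.atTop_mul_atTop₀ <|
      tendsto_atTop_add_const_right _ _ (tendsto_id.const_mul_atTop hb)
  refine tendsto_atTop_mono (fun y => ?_) (hq.comp tendsto_norm_cocompact_atTop)
  have := hf y
  simp only [Function.comp]
  linarith

variable [NormedSpace ℝ E]

lemma ConvexOn.exists_sub_mul_norm_le {f : E → ℝ} (hf : ConvexOn ℝ univ f)
    (hfc : LowerSemicontinuous f) : ∃ A K : ℝ, ∀ y, A - K * ‖y‖ ≤ f y := by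
  obtain ⟨l, a, hla, -⟩ := hf.exists_affine_le_of_lt (𝕜 := ℝ) (mem_univ 0)
    (sub_one_lt (f 0)) isClosed_univ (hfc.lowerSemicontinuousOn _)
  refine ⟨a, ‖l‖, fun y => ?_⟩
  have h1 := hla ⟨y, mem_univ y⟩
  have h2 := neg_le_of_abs_le (l.le_opNorm y)
  simp only [Pi.add_apply, domRestrict_apply, Function.comp_apply, RCLike.re_to_real,
    Function.const_apply] at h1
  linarith

end Coercive

def extBarrierObjective {ι E : Type*} [Fintype ι] [NormedAddCommGroup E] (μ c β : ℝ) (w : E)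
    (φ : ι → E → ℝ) (y : E) : ℝ :=
  (∑ i, extLogBarrier μ c (φ i y)) + (β / 2) * ‖y - w‖ ^ 2

def logBarrierObjective {ι E : Type*} [Fintype ι] [NormedAddCommGroup E] (μ β : ℝ) (w : E)
    (φ : ι → E → ℝ) (y : E) : ℝ :=
  (∑ i, -μ * log (-(φ i y))) + (β / 2) * ‖y - w‖ ^ 2

section Objective

variable {ι E : Type*} [Fintype ι] [NormedAddCommGroup E] {μ c β : ℝ} {w : E}
  {φ : ι → E → ℝ} {y : E}

lemma extBarrierObjective_le_logBarrierObjective (hμ : 0 < μ) (hy : ∀ i, φ i y < 0) :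
    extBarrierObjective μ c β w φ y ≤ logBarrierObjective μ β w φ y :=
  add_le_add_left (Finset.sum_le_sum fun i _ => extLogBarrier_le hμ (hy i)) _

lemma extBarrierObjective_eq_logBarrierObjective (hy : ∀ i, φ i y ≤ -exp (-c / μ)) :
    extBarrierObjective μ c β w φ y = logBarrierObjective μ β w φ y := by
  simp only [extBarrierObjective, logBarrierObjective, extLogBarrier_of_le (hy _)]

lemma continuous_extBarrierObjective (hμ : μ ≠ 0) (hφ : ∀ i, Continuous (φ i)) :
    Continuous (extBarrierObjective μ c β w φ) := by
  have := continuous_extLogBarrier (c := c) hμ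
  unfold extBarrierObjective
  fun_prop

lemma tendsto_extBarrierObjective_cocompact [NormedSpace ℝ E] [ProperSpace E] (hμ : 0 < μ)
    (hβ : 0 < β) (hconv : ∀ i, ConvexOn ℝ univ (φ i)) (hφ : ∀ i, Continuous (φ i)) :
    Tendsto (extBarrierObjective μ c β w φ) (cocompact E) atTop := by
  choose A K hAK using fun i => (hconv i).exists_sub_mul_norm_le (hφ i).lowerSemicontinuous
  set s := μ * exp (c / μ)
  have hs : 0 < s := by positivity
  refine tendsto_cocompact_atTop_of_quadratic_le (half_pos hβ) (K := s * ∑ i, K i + β * ‖w‖)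
    (A := -(s * ∑ i, A i + Fintype.card ι * (μ + c))) fun y => ?_
  have htangent : s * (∑ i, A i - (∑ i, K i) * ‖y‖) + Fintype.card ι * (μ + c)
      ≤ ∑ i, extLogBarrier μ c (φ i y) :=
    calc s * (∑ i, A i - (∑ i, K i) * ‖y‖) + Fintype.card ι * (μ + c)
        = ∑ i, (s * (A i - K i * ‖y‖) + (μ + c)) := by
          rw [Finset.sum_add_distrib, ← Finset.mul_sum, Finset.sum_sub_distrib,
            ← Finset.sum_mul, Finset.sum_const, Finset.card_univ, nsmul_eq_mul]
      _ ≤ ∑ i, logBarrierTangent μ c (φ i y) := Finset.sum_le_sum fun i _ => by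
          rw [logBarrierTangent, add_assoc]
          exact add_le_add_left (mul_le_mul_of_nonneg_left (hAK i y) hs.le) _
      _ ≤ ∑ i, extLogBarrier μ c (φ i y) :=
          Finset.sum_le_sum fun i _ => logBarrierTangent_le_extLogBarrier hμ _
  have hnorm : (‖y‖ - ‖w‖) ^ 2 ≤ ‖y - w‖ ^ 2 :=
    sq_le_sq.mpr ((abs_norm_sub_norm_le y w).trans (le_abs_self _))
  unfold extBarrierObjective
  nlinarith [mul_le_mul_of_nonneg_left hnorm (half_pos hβ).le,
    mul_nonneg hβ.le (sq_nonneg ‖w‖)]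

lemma exists_forall_extBarrierObjective_le [NormedSpace ℝ E] [ProperSpace E] (hμ : 0 < μ)
    (hβ : 0 < β) (hconv : ∀ i, ConvexOn ℝ univ (φ i)) (hφ : ∀ i, Continuous (φ i)) :
    ∃ yt, ∀ y, extBarrierObjective μ c β w φ yt ≤ extBarrierObjective μ c β w φ y :=
  (continuous_extBarrierObjective hμ.ne' hφ).exists_forall_le
    (tendsto_extBarrierObjective_cocompact hμ hβ hconv hφ)

lemma le_neg_exp_of_forall_extBarrierObjective_le [DecidableEq ι] (hμ : 0 < μ) {y₀ yt : E}
    (hy₀ : ∀ i, φ i y₀ < 0)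
    (hc : ∀ i y, logBarrierObjective μ β w φ y₀ - c
      ≤ (∑ j ∈ Finset.univ.erase i, extLogBarrier μ c (φ j y)) + (β / 2) * ‖y - w‖ ^ 2)
    (hyt : ∀ y, extBarrierObjective μ c β w φ yt ≤ extBarrierObjective μ c β w φ y) (i : ι) :
    φ i yt ≤ -exp (-c / μ) := by
  by_contra! hi
  have hsplit : extBarrierObjective μ c β w φ yt = extLogBarrier μ c (φ i yt) +
      ((∑ j ∈ Finset.univ.erase i, extLogBarrier μ c (φ j yt)) + (β / 2) * ‖yt - w‖ ^ 2) := by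
    rw [extBarrierObjective, ← Finset.add_sum_erase _ _ (Finset.mem_univ i), add_assoc]
  have := (hyt y₀).trans (extBarrierObjective_le_logBarrierObjective hμ hy₀)
  linarith [lt_extLogBarrier hμ hi, hc i yt]

lemma forall_logBarrierObjective_le_of_le_neg_exp (hμ : 0 < μ) {yt : E}
    (hb : ∀ i, φ i yt ≤ -exp (-c / μ))
    (hyt : ∀ y, extBarrierObjective μ c β w φ yt ≤ extBarrierObjective μ c β w φ y)
    (y : E) (hy : ∀ i, φ i y < 0) :
    logBarrierObjective μ β w φ yt ≤ logBarrierObjective μ β w φ y :=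
  calc logBarrierObjective μ β w φ yt = extBarrierObjective μ c β w φ yt :=
        (extBarrierObjective_eq_logBarrierObjective hb).symm
    _ ≤ extBarrierObjective μ c β w φ y := hyt y
    _ ≤ logBarrierObjective μ β w φ y := extBarrierObjective_le_logBarrierObjective hμ hy

end Objective

end

/-- Prop: equivalence of the y-subproblems with the standard and
extended log barriers: if `c` is large enough (encoded via the point `y₀` and
the inequalities `hc` expressing `c ≥ ψ(y₀) − τᵢ`), every minimizer of the
extended-barrier objective `ψ̃` satisfies `φᵢ(ỹ) ≤ -e^{-c/μ}` and minimizes the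
standard-barrier objective `ψ` on `{y : ∀ i, φᵢ(y) < 0}`; moreover the
minimizers of `ψ̃` and `ψ` coincide. -/
theorem stmt18 {n m : ℕ} (μ β c : ℝ) (hμ : 0 < μ) (hβ : 0 < β)
    (w : EuclideanSpace ℝ (Fin n))
    (φ : Fin m → EuclideanSpace ℝ (Fin n) → ℝ)
    (hconv : ∀ i, ConvexOn ℝ Set.univ (φ i))
    (hcont : ∀ i, Continuous (φ i))
    (p2 : ℝ → ℝ)
    (hp2 : p2 = fun z => if z ≤ -Real.exp (-c/μ) then -μ * Real.log (-z)
      else μ * Real.exp (c/μ) * z + μ + c)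
    (ψt ψ : EuclideanSpace ℝ (Fin n) → ℝ)
    (hψt : ψt = fun y => (∑ i, p2 (φ i y)) + (β/2) * ‖y - w‖^2)
    (hψ : ψ = fun y => (∑ i, -μ * Real.log (-(φ i y))) + (β/2) * ‖y - w‖^2)
    (y0 : EuclideanSpace ℝ (Fin n)) (hy0 : ∀ i, φ i y0 < 0)
    (hc : ∀ i : Fin m, ∀ y : EuclideanSpace ℝ (Fin n),
      ψ y0 - c ≤ (∑ j ∈ Finset.univ.erase i, p2 (φ j y)) + (β/2) * ‖y - w‖^2) :
    (∀ yt, (∀ y, ψt yt ≤ ψt y) →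
      (∀ i, φ i yt ≤ -Real.exp (-c/μ)) ∧
      (∀ y, (∀ i, φ i y < 0) → ψ yt ≤ ψ y)) ∧
    {y | ∀ z, ψt y ≤ ψt z}
      = {y | (∀ i, φ i y < 0) ∧ ∀ z, (∀ i, φ i z < 0) → ψ y ≤ ψ z} := by
  obtain rfl : p2 = extLogBarrier μ c := hp2
  obtain rfl : ψt = extBarrierObjective μ c β w φ := hψt
  obtain rfl : ψ = logBarrierObjective μ β w φ := hψ
  set ψt := extBarrierObjective μ c β w φ
  set ψ := logBarrierObjective μ β w φ
  have hmin : ∀ yt, (∀ y, ψt yt ≤ ψt y) →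
      (∀ i, φ i yt ≤ -exp (-c / μ)) ∧ ∀ y, (∀ i, φ i y < 0) → ψ yt ≤ ψ y := fun yt hyt =>
    have hb := le_neg_exp_of_forall_extBarrierObjective_le hμ hy0 hc hyt
    ⟨hb, forall_logBarrierObjective_le_of_le_neg_exp hμ hb hyt⟩
  have hfeas : ∀ {y}, (∀ i, φ i y ≤ -exp (-c / μ)) → ∀ i, φ i y < 0 :=
    fun hy i => (hy i).trans_lt (neg_neg_iff_pos.mpr (exp_pos _))
  refine ⟨hmin, Set.ext fun y => ⟨fun hy => ⟨hfeas (hmin y hy).1, (hmin y hy).2⟩, ?_⟩⟩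
  rintro ⟨hy, hyψ⟩ z
  obtain ⟨yt, hyt⟩ := exists_forall_extBarrierObjective_le (c := c) (w := w) hμ hβ hconv hcont
  calc ψt y ≤ ψ y := extBarrierObjective_le_logBarrierObjective hμ hy
    _ ≤ ψ yt := hyψ yt (hfeas (hmin yt hyt).1)
    _ = ψt yt := (extBarrierObjective_eq_logBarrierObjective (hmin yt hyt).1).symm
    _ ≤ ψt z := hyt z
end
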